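/- arXiv:2501.12836 — 5 statements merged into one kernel-verified Lean document; each statement's English description precedes it below -/
import Mathlib

section
/- Let S ⊆ ℕ² be a subset closed under componentwise minimum, satisfying: (i) 0 ∈ S and S + S ⊆ S; (ii) for α, β ∈ S with α₁ = β₁ and α₂ ≠ β₂ there exists ε ∈ S with ε₁ > α₁ and ε₂ = min{α₂, β₂} (and symmetrically in the other coordinate); (iii) S has a conductor 𝐜 (every γ ≥ 𝐜 componentwise lies in S). Then the set of maximal elements of S — elements γ ∈ S such that no β ∈ S has one coordinate equal to the corresponding coordinate of γ and the other strictly larger — is finite. -/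
/-- Let `S ⊆ ℕ²` be closed under componentwise minimum, with `0 ∈ S`,
`S + S ⊆ S`, satisfying the exchange property in each coordinate, and possessing a
conductor `c` (every `γ ≥ c` lies in `S`).  Then the set of maximal elements of `S`
(elements `γ ∈ S` such that no `β ∈ S` has one coordinate equal to the corresponding
coordinate of `γ` and the other strictly larger) is finite. -/
theorem maximals_finite_of_value_semigroup
    (S : Set (ℕ × ℕ))
    (h0 : (0, 0) ∈ S)
    (hadd : ∀ a ∈ S, ∀ b ∈ S, a + b ∈ S)
    (hmin : ∀ a ∈ S, ∀ b ∈ S, (min a.1 b.1, min a.2 b.2) ∈ S)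
    (hexch1 : ∀ a ∈ S, ∀ b ∈ S, a.1 = b.1 → a.2 ≠ b.2 →
      ∃ ε ∈ S, a.1 < ε.1 ∧ ε.2 = min a.2 b.2)
    (hexch2 : ∀ a ∈ S, ∀ b ∈ S, a.2 = b.2 → a.1 ≠ b.1 →
      ∃ ε ∈ S, a.2 < ε.2 ∧ ε.1 = min a.1 b.1)
    (c : ℕ × ℕ) (hc : ∀ γ : ℕ × ℕ, c ≤ γ → γ ∈ S) :
    {γ ∈ S | ¬ ∃ b ∈ S, (b.1 = γ.1 ∧ γ.2 < b.2) ∨ (b.2 = γ.2 ∧ γ.1 < b.1)}.Finite := by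
  apply (Set.finite_Iic c).subset
  rintro γ ⟨hγS, hmax⟩
  constructor
  · by_contra h
    push_neg at h
    exact hmax ⟨(γ.1, max (γ.2 + 1) c.2),
      hc _ ⟨le_of_lt h, le_max_right _ _⟩,
      Or.inl ⟨rfl, lt_of_lt_of_le (Nat.lt_succ_self _) (le_max_left _ _)⟩⟩
  · by_contra h
    push_neg at h
    exact hmax ⟨(max (γ.1 + 1) c.1, γ.2),
      hc _ ⟨le_max_right _ _, le_of_lt h⟩,
      Or.inr ⟨rfl, lt_of_lt_of_le (Nat.lt_succ_self _) (le_max_left _ _)⟩⟩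
end

section
/- Let E ⊆ ℤ^r be a set satisfying: closure under componentwise minimum, the exchange property (for α, β ∈ E with α_j = β_j there exists ε ∈ E with ε_j > α_j and ε_i ≥ min{α_i, β_i} for i ≠ j, with equality whenever α_i ≠ β_i), and existence of a conductor. Then any two saturated chains in E between the same two endpoints α⁰ < αⁿ have the same length. -/
/-- A saturated chain of length `n` in `E ⊆ ℤ^r` from `a` to `b`: a strictly increasing
(for the componentwise partial order) sequence `a = α⁰ < α¹ < ⋯ < αⁿ = b` of elements of `E`
such that no element of `E` lies strictly between two consecutive terms. -/
def IsSatChain (r : ℕ) (E : Set (Fin r → ℤ)) (a b : Fin r → ℤ) (n : ℕ) : Prop :=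
  ∃ α : ℕ → (Fin r → ℤ), α 0 = a ∧ α n = b ∧ (∀ i ≤ n, α i ∈ E) ∧
    (∀ i < n, α i < α (i + 1)) ∧
    ∀ i < n, ∀ ε ∈ E, ¬ (α i < ε ∧ ε < α (i + 1))

/-!
Two statements are proved together, by induction on the size of the interval involved:
(A) any two saturated chains from `s` to `t` have the same length;
(B) if `x, y ∈ E` are covered in `E` by the same `z`, there are saturated chains of equal length
from `x ⊓ y` to `x` and to `y`.

(B) gives (A) as in the Jordan–Dedekind argument for semimodular lattices: compare two chains
through their last steps `v₁, v₂` and a common chain from `s` to `v₁ ⊓ v₂`.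
For (B), if `x ⊓ y` is covered by both `x` and `y` there is nothing to do. Otherwise, say
`x ⊓ y < ε < x` with `ε ∈ E`. At a coordinate `j` where `x j < y j` we have `ε j = x j`; the
exchange property for `ε, x` at `j` gives `η ∈ E` above `ε` with `x j < η j` and `x ≰ η`, and
any cover `x'` of `z` in `E` above `η ⊓ z` satisfies `x ⊓ y < x ⊓ x'` and `x ⊓ y < y ⊓ x'`.
Induction applies to the pairs `(x, x')`, `(y, x')` and to the interval `[x ⊓ y, x']`.
-/

open Finset

section CovByIn

variable {α : Type*}

def CovByIn [Preorder α] (E : Set α) (x z : α) : Prop :=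
  x < z ∧ ∀ e ∈ E, ¬ (x < e ∧ e < z)

lemma exists_le_covByIn [Preorder α] [LocallyFiniteOrder α] {E : Set α} {ν z : α}
    (hν : ν ∈ E) (hνz : ν < z) : ∃ x ∈ E, ν ≤ x ∧ CovByIn E x z := by
  have hfin : {e | e ∈ E ∧ ν ≤ e ∧ e < z}.Finite :=
    (Set.finite_Icc ν z).subset fun e he => ⟨he.2.1, he.2.2.le⟩
  obtain ⟨x, hνx, hmax⟩ := hfin.exists_le_maximal ⟨hν, le_rfl, hνz⟩
  obtain ⟨hx, -, hxz⟩ := hmax.prop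
  exact ⟨x, hx, hνx, hxz, fun e he ⟨hxe, hez⟩ =>
    hmax.not_gt ⟨he, hνx.trans hxe.le, hez⟩ hxe⟩

lemma CovByIn.inf_lt_left [SemilatticeInf α] {E : Set α} {x y z : α} (hxz : CovByIn E x z)
    (hy : y ∈ E) (hyz : y < z) (hxy : x ≠ y) : x ⊓ y < x :=
  inf_le_left.lt_of_ne fun h => hxz.2 y hy ⟨(inf_eq_left.mp h).lt_of_ne hxy, hyz⟩

lemma card_Icc_lt_card_Icc_left [Preorder α] [LocallyFiniteOrder α] {a b c : α} (hac : a ≤ c)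
    (hab : a < b) : #(Icc b c) < #(Icc a c) :=
  card_lt_card (Icc_ssubset_Icc_left hac hab le_rfl)

lemma card_Icc_lt_card_Icc_right [Preorder α] [LocallyFiniteOrder α] {a b c : α} (hac : a ≤ c)
    (hbc : b < c) : #(Icc a b) < #(Icc a c) :=
  card_lt_card (Icc_ssubset_Icc_right hac le_rfl hbc)

end CovByIn

variable {r : ℕ} {E : Set (Fin r → ℤ)} {s t u x y z ε : Fin r → ℤ} {m n : ℕ}

lemma IsSatChain.refl (hs : s ∈ E) : IsSatChain r E s s 0 :=
  ⟨fun _ => s, rfl, rfl, fun _ _ => hs, by simp, by simp⟩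

lemma isSatChain_zero_iff : IsSatChain r E s t 0 ↔ s ∈ E ∧ s = t := by
  constructor
  · rintro ⟨α, rfl, rfl, hmem, -, -⟩
    exact ⟨hmem 0 le_rfl, rfl⟩
  · rintro ⟨hs, rfl⟩
    exact .refl hs

lemma isSatChain_succ_iff :
    IsSatChain r E s t (n + 1) ↔ ∃ v, IsSatChain r E s v n ∧ t ∈ E ∧ CovByIn E v t := by
  constructor
  · rintro ⟨α, h0, rfl, hmem, hlt, hsat⟩
    exact ⟨α n, ⟨α, h0, rfl, fun i hi => hmem i (by omega), fun i hi => hlt i (by omega),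
      fun i hi => hsat i (by omega)⟩, hmem _ le_rfl, hlt n n.lt_succ_self, hsat n n.lt_succ_self⟩
  · rintro ⟨v, ⟨α, h0, rfl, hmem, hlt, hsat⟩, ht, hvt, hcov⟩
    refine ⟨fun k => if k ≤ n then α k else t, by simpa using h0, by simp,
      fun i _ => ?_, fun i hi => ?_, fun i hi => ?_⟩
    · dsimp only
      split_ifs with h
      exacts [hmem i h, ht]
    · rcases Nat.lt_succ_iff_lt_or_eq.mp hi with hi | rfl
      · simpa [hi.le, Nat.succ_le_of_lt hi] using hlt i hi
      · simpa using hvt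
    · rcases Nat.lt_succ_iff_lt_or_eq.mp hi with hi | rfl
      · simpa [hi.le, Nat.succ_le_of_lt hi] using hsat i hi
      · simpa using hcov

namespace IsSatChain

lemma left_mem (h : IsSatChain r E s t n) : s ∈ E := by
  obtain ⟨α, rfl, -, hmem, -, -⟩ := h
  exact hmem 0 n.zero_le

lemma right_mem (h : IsSatChain r E s t n) : t ∈ E := by
  obtain ⟨α, -, rfl, hmem, -, -⟩ := h
  exact hmem n le_rfl

lemma le (h : IsSatChain r E s t n) : s ≤ t := by
  induction n generalizing t with
  | zero => exact (isSatChain_zero_iff.mp h).2.le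
  | succ n ih =>
    obtain ⟨v, hv, -, hvt, -⟩ := isSatChain_succ_iff.mp h
    exact (ih hv).trans hvt.le

lemma length_eq_zero_iff (h : IsSatChain r E s t n) : n = 0 ↔ s = t := by
  cases n with
  | zero => exact iff_of_true rfl (isSatChain_zero_iff.mp h).2
  | succ n =>
    obtain ⟨v, hv, -, hvt, -⟩ := isSatChain_succ_iff.mp h
    exact iff_of_false n.succ_ne_zero (hv.le.trans_lt hvt).ne

lemma trans (h₁ : IsSatChain r E s u m) (h₂ : IsSatChain r E u t n) :
    IsSatChain r E s t (m + n) := by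
  induction n generalizing t with
  | zero =>
    obtain ⟨-, rfl⟩ := isSatChain_zero_iff.mp h₂
    exact h₁
  | succ n ih =>
    obtain ⟨v, hv, ht, hvt⟩ := isSatChain_succ_iff.mp h₂
    exact isSatChain_succ_iff.mpr ⟨v, ih hv, ht, hvt⟩

end IsSatChain

lemma exists_isSatChain (hs : s ∈ E) (ht : t ∈ E) (hst : s ≤ t) :
    ∃ n, IsSatChain r E s t n := by
  induction hN : #(Icc s t) using Nat.strong_induction_on generalizing t with
  | _ N ih =>
  rcases hst.eq_or_lt with rfl | hlt
  · exact ⟨0, .refl hs⟩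
  obtain ⟨v, hv, hsv, hvt⟩ := exists_le_covByIn hs hlt
  obtain ⟨n, hn⟩ := ih _ (hN ▸ card_Icc_lt_card_Icc_right hst hvt.1) hv hsv rfl
  exact ⟨n + 1, isSatChain_succ_iff.mpr ⟨v, hn, ht, hvt⟩⟩

variable (E) in
def ExchangeProperty : Prop :=
  ∀ a ∈ E, ∀ b ∈ E, ∀ j : Fin r, a j = b j →
    ∃ ε ∈ E, a j < ε j ∧ ∀ i, i ≠ j →
      min (a i) (b i) ≤ ε i ∧ (a i ≠ b i → ε i = min (a i) (b i))

lemma ExchangeProperty.exists_of_lt (hexch : ExchangeProperty E) (hε : ε ∈ E) (hx : x ∈ E)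
    (hεx : ε < x) {j : Fin r} (hj : ε j = x j) :
    ∃ η ∈ E, ε ≤ η ∧ x j < η j ∧ ¬ x ≤ η := by
  obtain ⟨η, hη, hjη, hrest⟩ := hexch ε hε x hx j hj
  obtain ⟨d, hd⟩ := (Pi.lt_def.mp hεx).2
  have hdj : d ≠ j := by
    rintro rfl
    omega
  refine ⟨η, hη, fun i => ?_, hj ▸ hjη, fun hxη => ?_⟩
  · rcases eq_or_ne i j with rfl | hij
    · exact hjη.le
    · simpa [min_eq_left (hεx.le i)] using (hrest i hij).1
  · have hηd := (hrest d hdj).2 hd.ne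
    rw [min_eq_left hd.le] at hηd
    have hxηd : x d ≤ η d := hxη d
    omega

lemma exists_covByIn_inf_lt (hmin : InfClosed E) (hexch : ExchangeProperty E) (hx : x ∈ E)
    (hz : z ∈ E) (hxz : x ≤ z) (hyz : CovByIn E y z) (hε : ε ∈ E) (hxyε : x ⊓ y < ε)
    (hεx : ε < x) : ∃ x' ∈ E, CovByIn E x' z ∧ x ⊓ y < x ⊓ x' ∧ x ⊓ y < y ⊓ x' := by
  obtain ⟨j, hj⟩ : ∃ j, x j < y j := by
    by_contra! h
    have hxy : x ⊓ y = y := inf_eq_right.mpr h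
    exact hyz.2 ε hε ⟨hxy ▸ hxyε, hεx.trans_le hxz⟩
  have hεj : ε j = x j :=
    le_antisymm (hεx.le j) (by simpa [min_eq_left hj.le] using hxyε.le j)
  obtain ⟨η, hη, hεη, hjη, hxη⟩ := hexch.exists_of_lt hε hx hεx hεj
  have hνz : η ⊓ z < z := inf_le_right.lt_of_ne fun h => hxη (hxz.trans (inf_eq_right.mp h))
  obtain ⟨x', hx', hνx', hx'z⟩ := exists_le_covByIn (hmin hη hz) hνz
  have hεx' : ε ≤ x' := (le_inf hεη (hεx.le.trans hxz)).trans hνx'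
  have hjx' : x j < x' j := (lt_min hjη (hj.trans_le (hyz.1.le j))).trans_le (hνx' j)
  refine ⟨x', hx', hx'z, hxyε.trans_le (le_inf hεx.le hεx'),
    Pi.lt_def.mpr ⟨le_inf inf_le_right (hxyε.le.trans hεx'), j, ?_⟩⟩
  simpa [min_eq_left hj.le] using ⟨hj, hjx'⟩

variable (E) in
def EqualBranches (x y : Fin r → ℤ) : Prop :=
  ∃ k, IsSatChain r E (x ⊓ y) x k ∧ IsSatChain r E (x ⊓ y) y k

lemma EqualBranches.symm (h : EqualBranches E x y) : EqualBranches E y x := by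
  obtain ⟨k, hx, hy⟩ := h
  exact ⟨k, inf_comm x y ▸ hy, inf_comm x y ▸ hx⟩

variable (E) in
def ChainLengthsAgree (s t : Fin r → ℤ) : Prop :=
  ∀ m n, IsSatChain r E s t m → IsSatChain r E s t n → m = n

lemma equalBranches_of_inf_lt_of_lt (hmin : InfClosed E) (hexch : ExchangeProperty E)
    (hx : x ∈ E) (hy : y ∈ E) (hz : z ∈ E) (hxz : CovByIn E x z) (hyz : CovByIn E y z)
    (ihB : ∀ x' y', x' ∈ E → y' ∈ E → CovByIn E x' z → CovByIn E y' z →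
      #(Icc (x' ⊓ y') z) < #(Icc (x ⊓ y) z) → EqualBranches E x' y')
    (ihC : ∀ t < z, ChainLengthsAgree E (x ⊓ y) t)
    (hε : ε ∈ E) (hxyε : x ⊓ y < ε) (hεx : ε < x) : EqualBranches E x y := by
  obtain ⟨x', hx', hx'z, hlt₁, hlt₂⟩ :=
    exists_covByIn_inf_lt hmin hexch hx hz hxz.1.le hyz hε hxyε hεx
  obtain ⟨k₁, c₁, c₁'⟩ := ihB x x' hx hx' hxz hx'z <|
    card_Icc_lt_card_Icc_left (inf_le_left.trans hxz.1.le) hlt₁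
  obtain ⟨k₂, c₂, c₂'⟩ := ihB y x' hy hx' hyz hx'z <|
    card_Icc_lt_card_Icc_left (inf_le_left.trans hxz.1.le) hlt₂
  obtain ⟨l₁, d₁⟩ := exists_isSatChain (hmin hx hy) (hmin hx hx') hlt₁.le
  obtain ⟨l₂, d₂⟩ := exists_isSatChain (hmin hx hy) (hmin hy hx') hlt₂.le
  have hlen : l₁ + k₁ = l₂ + k₂ := ihC x' hx'z.1 _ _ (d₁.trans c₁') (d₂.trans c₂')
  exact ⟨l₁ + k₁, d₁.trans c₁, hlen ▸ d₂.trans c₂⟩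

lemma equalBranches_of_covByIn (hmin : InfClosed E) (hexch : ExchangeProperty E) (hz : z ∈ E)
    {N : ℕ} (hC : ∀ s t, #(Icc s t) < N → ChainLengthsAgree E s t)
    (hx : x ∈ E) (hy : y ∈ E) (hxz : CovByIn E x z) (hyz : CovByIn E y z)
    (hN : #(Icc (x ⊓ y) z) ≤ N) : EqualBranches E x y := by
  induction hM : #(Icc (x ⊓ y) z) using Nat.strong_induction_on generalizing x y with
  | _ M ih =>
  rcases eq_or_ne x y with rfl | hxy
  · exact ⟨0, by simpa using IsSatChain.refl hx, by simpa using IsSatChain.refl hx⟩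
  have ihB : ∀ x' y', x' ∈ E → y' ∈ E → CovByIn E x' z → CovByIn E y' z →
      #(Icc (x' ⊓ y') z) < #(Icc (x ⊓ y) z) → EqualBranches E x' y' :=
    fun x' y' hx' hy' hx'z hy'z hlt => ih _ (hM ▸ hlt) hx' hy' hx'z hy'z (by omega) rfl
  have ihC (t) (ht : t < z) : ChainLengthsAgree E (x ⊓ y) t :=
    hC _ _ <| (card_Icc_lt_card_Icc_right (inf_le_left.trans hxz.1.le) ht).trans_le hN
  by_cases hbx : ∃ ε ∈ E, x ⊓ y < ε ∧ ε < x
  · obtain ⟨ε, hε, hxyε, hεx⟩ := hbx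
    exact equalBranches_of_inf_lt_of_lt hmin hexch hx hy hz hxz hyz ihB ihC hε hxyε hεx
  by_cases hby : ∃ ε ∈ E, y ⊓ x < ε ∧ ε < y
  · obtain ⟨ε, hε, hyxε, hεy⟩ := hby
    rw [inf_comm] at ihB ihC
    exact (equalBranches_of_inf_lt_of_lt hmin hexch hy hx hz hyz hxz ihB ihC hε hyxε hεy).symm
  have hcx : CovByIn E (x ⊓ y) x :=
    ⟨hxz.inf_lt_left hy hyz.1 hxy, fun e he h => hbx ⟨e, he, h⟩⟩
  have hcy : CovByIn E (y ⊓ x) y :=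
    ⟨hyz.inf_lt_left hx hxz.1 hxy.symm, fun e he h => hby ⟨e, he, h⟩⟩
  rw [inf_comm] at hcy
  exact ⟨1, isSatChain_succ_iff.mpr ⟨_, .refl (hmin hx hy), hx, hcx⟩,
    isSatChain_succ_iff.mpr ⟨_, .refl (hmin hx hy), hy, hcy⟩⟩

lemma chainLengthsAgree_of_equalBranches (hmin : InfClosed E)
    (hC : ∀ s' t', #(Icc s' t') < #(Icc s t) → ChainLengthsAgree E s' t')
    (hB : ∀ x y, x ∈ E → y ∈ E → CovByIn E x t → CovByIn E y t → s ≤ x ⊓ y →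
      EqualBranches E x y) : ChainLengthsAgree E s t := by
  intro m n hm hn
  have hzero : m = 0 ↔ n = 0 := hm.length_eq_zero_iff.trans hn.length_eq_zero_iff.symm
  cases m with
  | zero => exact (hzero.mp rfl).symm
  | succ m => cases n with
  | zero => exact absurd (hzero.mpr rfl) m.succ_ne_zero
  | succ n =>
  obtain ⟨v₁, hv₁, -, hv₁t⟩ := isSatChain_succ_iff.mp hm
  obtain ⟨v₂, hv₂, -, hv₂t⟩ := isSatChain_succ_iff.mp hn
  have hsv : s ≤ v₁ ⊓ v₂ := le_inf hv₁.le hv₂.le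
  obtain ⟨k, hw₁, hw₂⟩ := hB v₁ v₂ hv₁.right_mem hv₂.right_mem hv₁t hv₂t hsv
  obtain ⟨l, hsw⟩ := exists_isSatChain hm.left_mem (hmin hv₁.right_mem hv₂.right_mem) hsv
  have hst : s ≤ t := hm.le
  have h₁ : m = l + k :=
    hC s v₁ (card_Icc_lt_card_Icc_right hst hv₁t.1) _ _ hv₁ (hsw.trans hw₁)
  have h₂ : n = l + k :=
    hC s v₂ (card_Icc_lt_card_Icc_right hst hv₂t.1) _ _ hv₂ (hsw.trans hw₂)
  rw [h₁, h₂]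

theorem chainLengthsAgree (hmin : InfClosed E) (hexch : ExchangeProperty E)
    (s t : Fin r → ℤ) : ChainLengthsAgree E s t := by
  induction hN : #(Icc s t) using Nat.strong_induction_on generalizing s t with
  | _ N ih =>
  intro m n hm
  refine chainLengthsAgree_of_equalBranches hmin (fun s' t' h => ih _ (hN ▸ h) s' t' rfl)
    (fun x y hx hy hxt hyt hsxy => ?_) m n hm
  exact equalBranches_of_covByIn hmin hexch hm.right_mem (fun s' t' h => ih _ h s' t' rfl)
    hx hy hxt hyt (hN ▸ card_le_card (Icc_subset_Icc_left hsxy))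

theorem satChain_length_unique_general
    (r : ℕ) (E : Set (Fin r → ℤ))
    (hmin : ∀ a ∈ E, ∀ b ∈ E, (fun i => min (a i) (b i)) ∈ E)
    (hexch : ∀ a ∈ E, ∀ b ∈ E, ∀ j : Fin r, a j = b j →
      ∃ ε ∈ E, a j < ε j ∧ ∀ i, i ≠ j →
        min (a i) (b i) ≤ ε i ∧ (a i ≠ b i → ε i = min (a i) (b i)))
    (a b : Fin r → ℤ) (m n : ℕ)
    (h1 : IsSatChain r E a b m) (h2 : IsSatChain r E a b n) :
    m = n :=
  chainLengthsAgree hmin hexch a b m n h1 h2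

/-- Let `E ⊆ ℤ^r` be closed under componentwise minimum, satisfy the exchange
property (for `α, β ∈ E` with `α_j = β_j` there is `ε ∈ E` with `ε_j > α_j` and
`ε_i ≥ min{α_i, β_i}` for `i ≠ j`, with equality whenever `α_i ≠ β_i`), and possess a
conductor.  Then any two saturated chains in `E` between the same endpoints have the same
length. -/
theorem satChain_length_unique
    (r : ℕ) (E : Set (Fin r → ℤ))
    (hmin : ∀ a ∈ E, ∀ b ∈ E, (fun i => min (a i) (b i)) ∈ E)
    (hexch : ∀ a ∈ E, ∀ b ∈ E, ∀ j : Fin r, a j = b j →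
      ∃ ε ∈ E, a j < ε j ∧ ∀ i, i ≠ j →
        min (a i) (b i) ≤ ε i ∧ (a i ≠ b i → ε i = min (a i) (b i)))
    (hcond : ∃ c ∈ E, ∀ γ : Fin r → ℤ, c ≤ γ → γ ∈ E)
    (a b : Fin r → ℤ) (hab : a < b) (m n : ℕ)
    (h1 : IsSatChain r E a b m) (h2 : IsSatChain r E a b n) :
    m = n :=
  satChain_length_unique_general r E hmin hexch a b m n h1 h2
end

section
/- Let E ⊆ ℕ² be a value set of a fractional ideal (closed under min, satisfying the exchange property, with conductor 𝐜_E and minimum α⁰), and let γ ≥ 𝐜_E. Then the number of elements in a saturated chain count from α⁰ to γ satisfies d_E(α⁰, γ) = ∑_{i=1}^{2} (γ_i − α⁰_i − #((ℕ + α⁰_i) ∖ pr_i(E))) − Θ₂, where pr_i is the i-th projection and Θ₂ = #(pr₂-images of relative maximal points of E). -/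
/-!
Along a saturated chain, every step `a ⋖ b` raises
`#(pr₁ E ∩ [0, b₁)) + #(pr₂ E ∩ [0, b₂)) - #{m ∈ RelMax E | m < b}` by exactly one.
Minimality of the step and closure under minima force every point of `E` over the open strip
`a₁ < x < b₁` to lie below height `a₂`, so by the exchange property the top of each such column is a
relative maximal point, and symmetrically for rows. Hence the relative maxima gained from `a` to `b`
correspond to the projection values skipped inside the two strips, together with `a` itself exactly
when the step is diagonal, while the values `a₁`, `a₂` contribute the remaining one. The quantity
vanishes at `α⁰`; at `γ ≥ 𝐜_E` it counts the projection values below `γ` minus all relative maxima,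
whose second coordinates are pairwise distinct.
-/

/-- A saturated chain of length `n` in `E ⊆ ℕ²` from `a` to `b`. -/
def IsSatChain2 (E : Set (ℕ × ℕ)) (a b : ℕ × ℕ) (n : ℕ) : Prop :=
  ∃ α : ℕ → ℕ × ℕ, α 0 = a ∧ α n = b ∧ (∀ i ≤ n, α i ∈ E) ∧
    (∀ i < n, α i < α (i + 1)) ∧
    ∀ i < n, ∀ ε ∈ E, ¬ (α i < ε ∧ ε < α (i + 1))

/-- The set of relative maximal points of `E ⊆ ℕ²` (for `r = 2` these are exactly the
maximal points: elements of `E` with empty fiber). -/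
def RelMax (E : Set (ℕ × ℕ)) : Set (ℕ × ℕ) :=
  {a ∈ E | ¬ ∃ b ∈ E, (b.1 = a.1 ∧ a.2 < b.2) ∨ (b.2 = a.2 ∧ a.1 < b.1)}

open Set

section ValueSet

variable {E : Set (ℕ × ℕ)}

lemma mem_relMax_of_isGreatest_fst
    (hexch2 : ∀ a ∈ E, ∀ b ∈ E, a.2 = b.2 → a.1 ≠ b.1 →
      ∃ ε ∈ E, a.2 < ε.2 ∧ ε.1 = min a.1 b.1)
    {x t : ℕ} (ht : IsGreatest {y | (x, y) ∈ E} t) : (x, t) ∈ RelMax E := by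
  refine ⟨ht.1, ?_⟩
  rintro ⟨c, hc, ⟨hcx, hct⟩ | ⟨hct, hcx⟩⟩
  · have hc' : (x, c.2) ∈ E := by rwa [show (x, c.2) = c from Prod.ext hcx.symm rfl]
    exact (ht.2 hc').not_gt hct
  · obtain ⟨ε, hε, htε, hεx⟩ := hexch2 (x, t) ht.1 c hc hct.symm hcx.ne
    have hε' : (x, ε.2) ∈ E := by
      rwa [show (x, ε.2) = ε from Prod.ext (hεx.trans (min_eq_left hcx.le)).symm rfl]
    exact (ht.2 hε').not_gt htε

lemma mem_relMax_of_isGreatest_snd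
    (hexch1 : ∀ a ∈ E, ∀ b ∈ E, a.1 = b.1 → a.2 ≠ b.2 →
      ∃ ε ∈ E, a.1 < ε.1 ∧ ε.2 = min a.2 b.2)
    {y t : ℕ} (ht : IsGreatest {x | (x, y) ∈ E} t) : (t, y) ∈ RelMax E := by
  refine ⟨ht.1, ?_⟩
  rintro ⟨c, hc, ⟨hct, hcy⟩ | ⟨hcy, hct⟩⟩
  · obtain ⟨ε, hε, htε, hεy⟩ := hexch1 (t, y) ht.1 c hc hct.symm hcy.ne
    have hε' : (ε.1, y) ∈ E := by
      rwa [show (ε.1, y) = ε from Prod.ext rfl (hεy.trans (min_eq_left hcy.le)).symm]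
    exact (ht.2 hε').not_gt htε
  · have hc' : (c.1, y) ∈ E := by rwa [show (c.1, y) = c from Prod.ext rfl hcy.symm]
    exact (ht.2 hc').not_gt hct

lemma relMax_injOn_fst : InjOn Prod.fst (RelMax E) := by
  intro m hm m' hm' h
  rcases lt_trichotomy m.2 m'.2 with hlt | heq | hgt
  · exact absurd ⟨m', hm'.1, Or.inl ⟨h.symm, hlt⟩⟩ hm.2
  · exact Prod.ext h heq
  · exact absurd ⟨m, hm.1, Or.inl ⟨h, hgt⟩⟩ hm'.2

lemma relMax_injOn_snd : InjOn Prod.snd (RelMax E) := by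
  intro m hm m' hm' h
  rcases lt_trichotomy m.1 m'.1 with hlt | heq | hgt
  · exact absurd ⟨m', hm'.1, Or.inr ⟨h.symm, hlt⟩⟩ hm.2
  · exact Prod.ext heq h
  · exact absurd ⟨m, hm.1, Or.inr ⟨h, hgt⟩⟩ hm'.2

lemma relMax_lt_iff {m b : ℕ × ℕ} (hm : m ∈ RelMax E) (hb : b ∈ E) :
    m < b ↔ m.1 < b.1 ∧ m.2 < b.2 := by
  refine ⟨fun h => ?_, fun h => Prod.lt_iff.2 (Or.inl ⟨h.1, h.2.le⟩)⟩
  obtain ⟨h1, h2⟩ := h.le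
  refine ⟨h1.lt_of_ne fun h1' => ?_, h2.lt_of_ne fun h2' => ?_⟩
  · exact hm.2 ⟨b, hb, Or.inl ⟨h1'.symm, h2.lt_of_ne fun h2' => h.ne (Prod.ext h1' h2')⟩⟩
  · exact hm.2 ⟨b, hb, Or.inr ⟨h2'.symm, h1.lt_of_ne fun h1' => h.ne (Prod.ext h1' h2')⟩⟩

lemma relMax_lt_of_conductor_le {c γ m : ℕ × ℕ} (hc : Ici c ⊆ E)
    (hm : m ∈ RelMax E) (hγ : c ≤ γ) : m < γ := by
  rw [relMax_lt_iff hm (hc hγ)]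
  constructor
  · by_contra! h
    exact hm.2 ⟨(m.1, max (m.2 + 1) c.2), hc (show c ≤ _ from ⟨hγ.1.trans h, le_max_right _ _⟩),
      Or.inl ⟨rfl, by simp⟩⟩
  · by_contra! h
    exact hm.2 ⟨(max (m.1 + 1) c.1, m.2), hc (show c ≤ _ from ⟨le_max_right _ _, hγ.2.trans h⟩),
      Or.inr ⟨rfl, by simp⟩⟩

section Cover

variable {a b : ℕ × ℕ}

lemma snd_lt_of_cover (hE : InfClosed E) (hb : b ∈ E) (hab : a < b)
    (hcov : ∀ c ∈ E, ¬(a < c ∧ c < b)) {p : ℕ × ℕ} (hp : p ∈ E)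
    (h1 : a.1 < p.1) (h2 : p.1 < b.1) : p.2 < a.2 := by
  by_contra! h
  have := hab.le.2
  refine hcov _ (hE hp hb) ⟨Prod.lt_iff.2 (Or.inl ⟨?_, ?_⟩), Prod.lt_iff.2 (Or.inl ⟨?_, ?_⟩)⟩ <;>
    simp only [Prod.fst_inf, Prod.snd_inf] <;> omega

lemma fst_lt_of_cover (hE : InfClosed E) (hb : b ∈ E) (hab : a < b)
    (hcov : ∀ c ∈ E, ¬(a < c ∧ c < b)) {p : ℕ × ℕ} (hp : p ∈ E)
    (h1 : a.2 < p.2) (h2 : p.2 < b.2) : p.1 < a.1 := by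
  by_contra! h
  have := hab.le.1
  refine hcov _ (hE hp hb) ⟨Prod.lt_iff.2 (Or.inr ⟨?_, ?_⟩), Prod.lt_iff.2 (Or.inr ⟨?_, ?_⟩)⟩ <;>
    simp only [Prod.fst_inf, Prod.snd_inf] <;> omega

lemma mem_relMax_of_cover (hE : InfClosed E) (ha : a ∈ E) (hb : b ∈ E)
    (hcov : ∀ c ∈ E, ¬(a < c ∧ c < b)) (h1 : a.1 < b.1) (h2 : a.2 < b.2) : a ∈ RelMax E := by
  refine ⟨ha, ?_⟩
  rintro ⟨c, hc, ⟨hc1, hc2⟩ | ⟨hc2, hc1⟩⟩ <;>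
  · refine hcov _ (hE hc hb) ⟨Prod.lt_iff.2 ?_, Prod.lt_iff.2 ?_⟩ <;>
      simp only [Prod.fst_inf, Prod.snd_inf] <;> omega

lemma image_fst_relMax_of_cover (hE : InfClosed E)
    (hexch2 : ∀ a ∈ E, ∀ b ∈ E, a.2 = b.2 → a.1 ≠ b.1 →
      ∃ ε ∈ E, a.2 < ε.2 ∧ ε.1 = min a.1 b.1)
    (hb : b ∈ E) (hab : a < b) (hcov : ∀ c ∈ E, ¬(a < c ∧ c < b)) :
    Prod.fst '' {m ∈ RelMax E | a.1 < m.1 ∧ m.1 < b.1} = Prod.fst '' E ∩ Ioo a.1 b.1 := by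
  refine Subset.antisymm ?_ ?_
  · rintro _ ⟨m, ⟨hm, hm1⟩, rfl⟩
    exact ⟨⟨m, hm.1, rfl⟩, hm1⟩
  · rintro _ ⟨⟨p, hp, rfl⟩, hp1⟩
    have hbdd : BddAbove {y | (p.1, y) ∈ E} :=
      ⟨a.2, fun y hy => (snd_lt_of_cover hE hb hab hcov hy hp1.1 hp1.2).le⟩
    obtain ⟨t, ht⟩ := hbdd.exists_isGreatest_of_nonempty ⟨p.2, hp⟩
    exact ⟨(p.1, t), ⟨mem_relMax_of_isGreatest_fst hexch2 ht, hp1⟩, rfl⟩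

lemma image_snd_relMax_of_cover (hE : InfClosed E)
    (hexch1 : ∀ a ∈ E, ∀ b ∈ E, a.1 = b.1 → a.2 ≠ b.2 →
      ∃ ε ∈ E, a.1 < ε.1 ∧ ε.2 = min a.2 b.2)
    (hb : b ∈ E) (hab : a < b) (hcov : ∀ c ∈ E, ¬(a < c ∧ c < b)) :
    Prod.snd '' {m ∈ RelMax E | a.2 < m.2 ∧ m.2 < b.2} = Prod.snd '' E ∩ Ioo a.2 b.2 := by
  refine Subset.antisymm ?_ ?_
  · rintro _ ⟨m, ⟨hm, hm2⟩, rfl⟩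
    exact ⟨⟨m, hm.1, rfl⟩, hm2⟩
  · rintro _ ⟨⟨p, hp, rfl⟩, hp2⟩
    have hbdd : BddAbove {x | (x, p.2) ∈ E} :=
      ⟨a.1, fun x hx => (fst_lt_of_cover hE hb hab hcov hx hp2.1 hp2.2).le⟩
    obtain ⟨t, ht⟩ := hbdd.exists_isGreatest_of_nonempty ⟨p.1, hp⟩
    exact ⟨(t, p.2), ⟨mem_relMax_of_isGreatest_snd hexch1 ht, hp2⟩, rfl⟩

lemma relMax_inter_Iio_eq_of_cover (hE : InfClosed E) (hb : b ∈ E) (hab : a < b)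
    (hcov : ∀ c ∈ E, ¬(a < c ∧ c < b)) :
    RelMax E ∩ Iio b = RelMax E ∩ Iic a ∪ {m ∈ RelMax E | a.1 < m.1 ∧ m.1 < b.1}
      ∪ {m ∈ RelMax E | a.2 < m.2 ∧ m.2 < b.2} := by
  ext m
  simp only [mem_union, mem_inter_iff, mem_ofPred_eq, mem_Iio, mem_Iic]
  constructor
  · rintro ⟨hm, hmb⟩
    have hmb' := (relMax_lt_iff hm hb).1 hmb
    by_cases hma : m ≤ a
    · exact Or.inl (Or.inl ⟨hm, hma⟩)
    · rw [Prod.le_def, not_and_or, not_le, not_le] at hma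
      rcases hma with h1 | h2
      · exact Or.inl (Or.inr ⟨hm, h1, hmb'.1⟩)
      · exact Or.inr ⟨hm, h2, hmb'.2⟩
  · rintro ((⟨hm, hma⟩ | ⟨hm, hm1⟩) | ⟨hm, hm2⟩)
    · exact ⟨hm, hma.trans_lt hab⟩
    · have := snd_lt_of_cover hE hb hab hcov hm.1 hm1.1 hm1.2
      exact ⟨hm, Prod.lt_iff.2 (Or.inl ⟨hm1.2, by have := hab.le.2; omega⟩)⟩
    · have := fst_lt_of_cover hE hb hab hcov hm.1 hm2.1 hm2.2
      exact ⟨hm, Prod.lt_iff.2 (Or.inr ⟨by have := hab.le.1; omega, hm2.2⟩)⟩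

lemma ncard_relMax_inter_Iio_of_cover (hE : InfClosed E)
    (hexch1 : ∀ a ∈ E, ∀ b ∈ E, a.1 = b.1 → a.2 ≠ b.2 →
      ∃ ε ∈ E, a.1 < ε.1 ∧ ε.2 = min a.2 b.2)
    (hexch2 : ∀ a ∈ E, ∀ b ∈ E, a.2 = b.2 → a.1 ≠ b.1 →
      ∃ ε ∈ E, a.2 < ε.2 ∧ ε.1 = min a.1 b.1)
    (hb : b ∈ E) (hab : a < b) (hcov : ∀ c ∈ E, ¬(a < c ∧ c < b)) :
    (RelMax E ∩ Iio b).ncard = (RelMax E ∩ Iic a).ncard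
      + (Prod.fst '' E ∩ Ioo a.1 b.1).ncard + (Prod.snd '' E ∩ Ioo a.2 b.2).ncard := by
  have hfin : (RelMax E ∩ Iio b).Finite := (finite_Iio b).inter_of_right _
  have hdisj₁ : Disjoint (RelMax E ∩ Iic a) {m ∈ RelMax E | a.1 < m.1 ∧ m.1 < b.1} :=
    disjoint_left.2 fun m hma hm => hm.2.1.not_ge hma.2.1
  have hdisj₂ : Disjoint (RelMax E ∩ Iic a ∪ {m ∈ RelMax E | a.1 < m.1 ∧ m.1 < b.1})
      {m ∈ RelMax E | a.2 < m.2 ∧ m.2 < b.2} := by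
    refine disjoint_union_left.2 ⟨disjoint_left.2 fun m hma hm => hm.2.1.not_ge hma.2.2,
      disjoint_left.2 fun m hm1 hm2 => ?_⟩
    exact (snd_lt_of_cover hE hb hab hcov hm1.1.1 hm1.2.1 hm1.2.2).not_gt hm2.2.1
  rw [relMax_inter_Iio_eq_of_cover hE hb hab hcov] at hfin ⊢
  rw [ncard_union_eq hdisj₂ (hfin.subset subset_union_left) (hfin.subset subset_union_right),
    ncard_union_eq hdisj₁ (hfin.subset (subset_union_left.trans subset_union_left))
      (hfin.subset (subset_union_right.trans subset_union_left)),
    ← image_fst_relMax_of_cover hE hexch2 hb hab hcov,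
    ← image_snd_relMax_of_cover hE hexch1 hb hab hcov,
    (relMax_injOn_fst.mono (sep_subset _ _)).ncard_image,
    (relMax_injOn_snd.mono (sep_subset _ _)).ncard_image]

end Cover

lemma ncard_inter_Iio_eq {α : Type*} [LinearOrder α] [LocallyFiniteOrderBot α] (S : Set α)
    {s t : α} (hs : s ∈ S) (hst : s ≤ t) :
    (S ∩ Iio t).ncard = (S ∩ Iio s).ncard + (S ∩ Ioo s t).ncard + if s < t then 1 else 0 := by
  rcases hst.lt_or_eq with hst | rfl
  · have hsplit : S ∩ Iio t = S ∩ Iio s ∪ insert s (S ∩ Ioo s t) := by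
      rw [← inter_insert_of_mem hs, Ioo_insert_left hst, ← inter_union_distrib_left,
        Iio_union_Ico_eq_Iio hst.le]
    have hdisj : Disjoint (S ∩ Iio s) (insert s (S ∩ Ioo s t)) := by
      rw [disjoint_insert_right]
      exact ⟨fun h => lt_irrefl s h.2,
        disjoint_left.2 fun x hx hx' => hx.2.not_gt hx'.2.1⟩
    have hfin : (S ∩ Iio t).Finite := (finite_Iio t).inter_of_right S
    rw [hsplit] at hfin ⊢
    rw [ncard_union_eq hdisj (hfin.subset subset_union_left) (hfin.subset subset_union_right),
      ncard_insert_of_notMem (fun h => lt_irrefl s h.2.1)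
        ((hfin.subset subset_union_right).subset (subset_insert _ _)), if_pos hst, add_assoc]
  · simp

lemma ncard_inter_Iic_eq {α : Type*} [PartialOrder α] [LocallyFiniteOrderBot α] (S : Set α)
    (a : α) [Decidable (a ∈ S)] :
    (S ∩ Iic a).ncard = (S ∩ Iio a).ncard + if a ∈ S then 1 else 0 := by
  rw [← Iio_insert]
  split_ifs with ha
  · rw [inter_insert_of_mem ha, ncard_insert_of_notMem fun h => lt_irrefl a h.2]
  · rw [inter_insert_of_notMem ha, add_zero]

noncomputable def chainPotential (E : Set (ℕ × ℕ)) (b : ℕ × ℕ) : ℤ :=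
  (Prod.fst '' E ∩ Iio b.1).ncard + (Prod.snd '' E ∩ Iio b.2).ncard - (RelMax E ∩ Iio b).ncard

lemma chainPotential_of_cover (hE : InfClosed E)
    (hexch1 : ∀ a ∈ E, ∀ b ∈ E, a.1 = b.1 → a.2 ≠ b.2 →
      ∃ ε ∈ E, a.1 < ε.1 ∧ ε.2 = min a.2 b.2)
    (hexch2 : ∀ a ∈ E, ∀ b ∈ E, a.2 = b.2 → a.1 ≠ b.1 →
      ∃ ε ∈ E, a.2 < ε.2 ∧ ε.1 = min a.1 b.1)
    {a b : ℕ × ℕ} (ha : a ∈ E) (hb : b ∈ E) (hab : a < b) (hcov : ∀ c ∈ E, ¬(a < c ∧ c < b)) :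
    chainPotential E b = chainPotential E a + 1 := by
  classical
  have hmem : a ∈ RelMax E ↔ a.1 < b.1 ∧ a.2 < b.2 :=
    ⟨fun h => (relMax_lt_iff h hb).1 hab, fun h => mem_relMax_of_cover hE ha hb hcov h.1 h.2⟩
  have hR := ncard_relMax_inter_Iio_of_cover hE hexch1 hexch2 hb hab hcov
  have h1 := ncard_inter_Iio_eq (Prod.fst '' E) ⟨a, ha, rfl⟩ hab.le.1
  have h2 := ncard_inter_Iio_eq (Prod.snd '' E) ⟨a, ha, rfl⟩ hab.le.2
  have hne : a.1 < b.1 ∨ a.2 < b.2 := (Prod.lt_iff.1 hab).imp And.left And.right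
  rw [ncard_inter_Iic_eq, if_congr hmem rfl rfl] at hR
  unfold chainPotential
  rw [h1, h2, hR]
  split_ifs <;> push_cast <;> omega

lemma chainPotential_eq_zero_of_mem_lowerBounds {a : ℕ × ℕ} (h : a ∈ lowerBounds E) :
    chainPotential E a = 0 := by
  have h1 : Prod.fst '' E ∩ Iio a.1 = ∅ :=
    eq_empty_of_forall_notMem fun _ ⟨⟨p, hp, hx⟩, hlt⟩ => (hx ▸ (h hp).1).not_gt hlt
  have h2 : Prod.snd '' E ∩ Iio a.2 = ∅ :=
    eq_empty_of_forall_notMem fun _ ⟨⟨p, hp, hy⟩, hlt⟩ => (hy ▸ (h hp).2).not_gt hlt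
  have h3 : RelMax E ∩ Iio a = ∅ := eq_empty_of_forall_notMem fun m hm => (h hm.1.1).not_gt hm.2
  simp [chainPotential, h1, h2, h3]

lemma IsSatChain2.apply_eq_apply_add {Φ : ℕ × ℕ → ℤ}
    (hΦ : ∀ a ∈ E, ∀ b ∈ E, a < b → (∀ c ∈ E, ¬(a < c ∧ c < b)) → Φ b = Φ a + 1)
    {a b : ℕ × ℕ} {n : ℕ} (h : IsSatChain2 E a b n) : Φ b = Φ a + n := by
  obtain ⟨α, rfl, rfl, hmem, hlt, hcov⟩ := h
  suffices ∀ i ≤ n, Φ (α i) = Φ (α 0) + i from this n le_rfl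
  intro i
  induction i with
  | zero => simp
  | succ i ih =>
    intro hi
    rw [hΦ _ (hmem i (by omega)) _ (hmem _ hi) (hlt i hi) (hcov i hi), ih (by omega)]
    push_cast
    ring

lemma ncard_inter_Iio_add_ncard_gaps (S : Set ℕ) {s t : ℕ} (hlow : S ⊆ Ici s)
    (hup : Ici t ⊆ S) (hst : s ≤ t) :
    (S ∩ Iio t).ncard + {m : ℕ | s ≤ m ∧ m ∉ S}.ncard + s = t := by
  have hsplit : S ∩ Iio t ∪ {m : ℕ | s ≤ m ∧ m ∉ S} = Ico s t := by
    ext x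
    simp only [mem_union, mem_inter_iff, mem_Iio, mem_ofPred_eq, mem_Ico]
    by_cases hx : x ∈ S
    · have : s ≤ x := hlow hx
      simp only [hx, not_true_eq_false, and_false, or_false, true_and]
      omega
    · have : ¬t ≤ x := mt (@hup x) hx
      simp only [hx, not_false_eq_true, and_true, false_and, false_or]
      omega
  have hfin : (Ico s t).Finite := finite_Ico s t
  rw [← hsplit] at hfin
  rw [← ncard_union_eq (disjoint_left.2 fun x hx hx' => hx'.2 hx.1)
    (hfin.subset subset_union_left) (hfin.subset subset_union_right), hsplit, ncard_Ico_nat]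
  omega

end ValueSet

theorem distance_formula_two_branches_general
    (E : Set (ℕ × ℕ))
    (hmin : ∀ a ∈ E, ∀ b ∈ E, (min a.1 b.1, min a.2 b.2) ∈ E)
    (hexch1 : ∀ a ∈ E, ∀ b ∈ E, a.1 = b.1 → a.2 ≠ b.2 →
      ∃ ε ∈ E, a.1 < ε.1 ∧ ε.2 = min a.2 b.2)
    (hexch2 : ∀ a ∈ E, ∀ b ∈ E, a.2 = b.2 → a.1 ≠ b.1 →
      ∃ ε ∈ E, a.2 < ε.2 ∧ ε.1 = min a.1 b.1)
    (α0 : ℕ × ℕ) (hα0 : α0 ∈ E ∧ ∀ a ∈ E, α0 ≤ a)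
    (cE : ℕ × ℕ) (hcE : cE ∈ E ∧ ∀ γ : ℕ × ℕ, cE ≤ γ → γ ∈ E)
    (γ : ℕ × ℕ) (hγ : cE ≤ γ)
    (n : ℕ) (hchain : IsSatChain2 E α0 γ n) :
    n + (Prod.snd '' RelMax E).ncard
      + {m : ℕ | α0.1 ≤ m ∧ m ∉ Prod.fst '' E}.ncard
      + {m : ℕ | α0.2 ≤ m ∧ m ∉ Prod.snd '' E}.ncard
      + α0.1 + α0.2 = γ.1 + γ.2 := by
  have hE : InfClosed E := fun a ha b hb => hmin a ha b hb
  have hα0γ : α0 ≤ γ := hα0.2 γ (hcE.2 γ hγ)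
  have hpot := hchain.apply_eq_apply_add fun a ha b hb =>
    chainPotential_of_cover hE hexch1 hexch2 ha hb
  have hR : RelMax E ∩ Iio γ = RelMax E :=
    inter_eq_left.2 fun m hm => relMax_lt_of_conductor_le hcE.2 hm hγ
  have hgaps₁ := ncard_inter_Iio_add_ncard_gaps (Prod.fst '' E)
    (by rintro _ ⟨p, hp, rfl⟩; exact (hα0.2 p hp).1)
    (fun x hx => ⟨(x, γ.2), hcE.2 _ ⟨hγ.1.trans hx, hγ.2⟩, rfl⟩) hα0γ.1
  have hgaps₂ := ncard_inter_Iio_add_ncard_gaps (Prod.snd '' E)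
    (by rintro _ ⟨p, hp, rfl⟩; exact (hα0.2 p hp).2)
    (fun y hy => ⟨(γ.1, y), hcE.2 _ ⟨hγ.1, hγ.2.trans hy⟩, rfl⟩) hα0γ.2
  rw [chainPotential_eq_zero_of_mem_lowerBounds fun a ha => hα0.2 a ha, chainPotential, hR]
    at hpot
  rw [relMax_injOn_snd.ncard_image]
  omega

/-- Guzmán–Hefez colength formula for `r = 2`: Let `E ⊆ ℕ²` be the value set
of a fractional ideal (closed under minima, with the exchange property, with conductor
`𝐜_E` and minimum `α⁰`), and let `γ ≥ 𝐜_E`.  Then the saturated-chain distance from `α⁰`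
to `γ` satisfies
`d_E(α⁰, γ) = ∑_{i=1,2} (γ_i − α⁰_i − #((ℕ + α⁰_i) ∖ pr_i(E))) − Θ₂`,
where `Θ₂` is the number of second coordinates of relative maximal points of `E`;
equivalently (avoiding truncated subtraction)
`d_E(α⁰,γ) + Θ₂ + #gaps₁ + #gaps₂ + α⁰₁ + α⁰₂ = γ₁ + γ₂`. -/
theorem distance_formula_two_branches
    (E : Set (ℕ × ℕ))
    (hmin : ∀ a ∈ E, ∀ b ∈ E, (min a.1 b.1, min a.2 b.2) ∈ E)
    (hexch1 : ∀ a ∈ E, ∀ b ∈ E, a.1 = b.1 → a.2 ≠ b.2 →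
      ∃ ε ∈ E, a.1 < ε.1 ∧ ε.2 = min a.2 b.2)
    (hexch2 : ∀ a ∈ E, ∀ b ∈ E, a.2 = b.2 → a.1 ≠ b.1 →
      ∃ ε ∈ E, a.2 < ε.2 ∧ ε.1 = min a.1 b.1)
    (α0 : ℕ × ℕ) (hα0 : α0 ∈ E ∧ ∀ a ∈ E, α0 ≤ a)
    (cE : ℕ × ℕ) (hcE : cE ∈ E ∧ ∀ γ : ℕ × ℕ, cE ≤ γ → γ ∈ E)
    (hcEmin : ∀ c' ∈ E, (∀ γ : ℕ × ℕ, c' ≤ γ → γ ∈ E) → cE ≤ c')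
    (γ : ℕ × ℕ) (hγ : cE ≤ γ)
    (n : ℕ) (hchain : IsSatChain2 E α0 γ n) :
    n + (Prod.snd '' RelMax E).ncard
      + {m : ℕ | α0.1 ≤ m ∧ m ∉ Prod.fst '' E}.ncard
      + {m : ℕ | α0.2 ≤ m ∧ m ∉ Prod.snd '' E}.ncard
      + α0.1 + α0.2 = γ.1 + γ.2 :=
  distance_formula_two_branches_general E hmin hexch1 hexch2 α0 hα0 cE hcE γ hγ n hchain
end

section
/- Let g_q ∈ ℂ[x,y] be the minimal polynomial of the truncation s_q(x) of the Puiseux series of an irreducible plane curve with semigroup ⟨β̄₀,…,β̄_g⟩, given by g_q(x,y) = ∏_{ε^{β₀/e_{q−1}} = 1} (y − s_q(ε^{β₀} x)). Then g_q is monic in y with deg_y(g_q) = β̄₀/e_{q−1}, and the branch D_q defined by g_q satisfies [C, D_q]₀ = β̄_q (maximal contact of genus q − 1). -/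
/-!
Each factor `y - σ(ζᵏt)` is monic of degree one and `x ↦ t^{β₀}` is injective, which gives
monicity and the degree. Evaluated on the branch, the factor with `z = ζᵏ` has order `β_m`,
where `m` is the first index with `z^{β_m} ≠ 1` (or `q`): below `β_m` the series and the
conjugate truncation agree term by term. As `z^{e_i} = 1` exactly for `i < m`, summing over `k`
is a count of the `k` with `(ζᵏ)^{e_i} = 1`; there are `e_i / e_{q-1}` of them once
`N = β₀ / e_{q-1}` is prime to `e_{q-1}`, and the total becomes
`(β₀β₁ + ∑ e_i (β_{i+1} - β_i)) / e_{q-1} = β̄_q` by the recurrence for `β̄`.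
That coprimality is forced: the product has coefficients in `ℂ[[t^{β₀}]]`, so for a primitive
`β₀`-th root of unity `ω` the series `σ(ωt)` is again one of the roots `σ(ζᵏt)`.
-/

open Finset

theorem pow_eq_one_of_dvd {M : Type*} [Monoid M] {z : M} {a b : ℕ} (h : z ^ a = 1)
    (hab : a ∣ b) : z ^ b = 1 := by
  obtain ⟨c, rfl⟩ := hab
  rw [pow_mul, h, one_pow]

theorem Finset.pow_gcd_eq_one {M ι : Type*} [Monoid M] {x : M} {s : Finset ι} {f : ι → ℕ}
    (h : ∀ i ∈ s, x ^ f i = 1) : x ^ s.gcd f = 1 :=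
  orderOf_dvd_iff_pow_eq_one.mp <| dvd_gcd fun i hi => orderOf_dvd_of_pow_eq_one (h i hi)

theorem Finset.sum_Ico_ite_sub_eq {G : Type*} [AddCommGroup G] (f : ℕ → G) {p : ℕ → Prop}
    [DecidablePred p] {m q : ℕ} (hm1 : 1 ≤ m) (hmq : m ≤ q) (hp : ∀ i < q, p i ↔ i < m) :
    ∑ i ∈ Ico 1 q, (if p i then f (i + 1) - f i else 0) = f m - f 1 := by
  rw [← sum_filter, ← sum_Ico_sub f hm1]
  congr 1
  ext i
  simp only [mem_filter, mem_Ico]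
  constructor
  · rintro ⟨⟨h1, hq⟩, hpi⟩; exact ⟨h1, (hp i hq).mp hpi⟩
  · rintro ⟨h1, hm⟩; exact ⟨⟨h1, by omega⟩, (hp i (by omega)).mpr hm⟩

theorem Nat.exists_forall_lt_iff_lt {p : ℕ → Prop} (hp : ∀ i j, i ≤ j → p j → p i) (q : ℕ) :
    ∃ m ≤ q, ∀ i < q, p i ↔ i < m := by
  classical
  have hex : ∃ m, m = q ∨ ¬ p m := ⟨q, Or.inl rfl⟩
  refine ⟨Nat.find hex, Nat.find_min' hex (Or.inl rfl),
    fun i hi => ⟨fun hpi => ?_, fun hlt => ?_⟩⟩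
  · by_contra! hle
    rcases Nat.find_spec hex with heq | hnp
    · omega
    · exact hnp (hp _ _ hle hpi)
  · have := Nat.find_min hex hlt
    simp only [not_or, not_not] at this
    exact this.2

theorem Nat.dvd_mul_iff_div_gcd_dvd {N d k : ℕ} (hN : 0 < N) :
    N ∣ k * d ↔ N / N.gcd d ∣ k := by
  have hg : 0 < N.gcd d := Nat.gcd_pos_of_pos_left d hN
  have hN' : N = N / N.gcd d * N.gcd d := (Nat.div_mul_cancel (Nat.gcd_dvd_left N d)).symm
  have hd' : d = d / N.gcd d * N.gcd d := (Nat.div_mul_cancel (Nat.gcd_dvd_right N d)).symm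
  calc N ∣ k * d ↔ N / N.gcd d * N.gcd d ∣ k * (d / N.gcd d) * N.gcd d := by
        rw [mul_assoc, ← hd', ← hN']
    _ ↔ N / N.gcd d ∣ k := by
        rw [Nat.mul_dvd_mul_iff_right hg, (Nat.coprime_div_gcd_div_gcd hg).dvd_mul_right]

theorem Nat.card_filter_range_dvd {r N : ℕ} (h : r ∣ N) :
    #{k ∈ range N | r ∣ k} = N / r := by
  rcases Nat.eq_zero_or_pos r with rfl | hr
  · obtain rfl : N = 0 := by simpa using h
    simp
  obtain ⟨s, rfl⟩ := h
  have himg : {k ∈ range (r * s) | r ∣ k} = (range s).image (r * ·) := by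
    ext k
    simp only [mem_filter, mem_range, mem_image]
    constructor
    · rintro ⟨hk, c, rfl⟩
      exact ⟨c, (mul_lt_mul_iff_right₀ hr).mp hk, rfl⟩
    · rintro ⟨c, hc, rfl⟩
      exact ⟨(mul_lt_mul_iff_right₀ hr).mpr hc, c, rfl⟩
  rw [himg, Finset.card_image_of_injective _ (mul_right_injective₀ hr.ne'), card_range,
    Nat.mul_div_cancel_left _ hr]

theorem IsPrimitiveRoot.pow_pow_eq_one_of_dvd {M : Type*} [CommMonoid M] {ζ : M} {N b : ℕ}
    (hζ : IsPrimitiveRoot ζ N) (k : ℕ) (h : N ∣ b) : (ζ ^ k) ^ b = 1 := by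
  rw [← pow_mul, hζ.pow_eq_one_iff_dvd]
  exact h.mul_left k

theorem IsPrimitiveRoot.card_filter_range_pow_eq_one {M : Type*} [CommMonoid M] [DecidableEq M]
    {ζ : M} {N : ℕ} (hζ : IsPrimitiveRoot ζ N) (hN : 0 < N) (d : ℕ) :
    #{k ∈ range N | (ζ ^ k) ^ d = 1} = N.gcd d := by
  have hg : 0 < N.gcd d := Nat.gcd_pos_of_pos_left d hN
  have hiff : ∀ k, (ζ ^ k) ^ d = 1 ↔ N / N.gcd d ∣ k := fun k => by
    rw [← pow_mul, hζ.pow_eq_one_iff_dvd, Nat.dvd_mul_iff_div_gcd_dvd hN]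
  simp_rw [hiff]
  rw [Nat.card_filter_range_dvd (Nat.div_dvd_of_dvd (Nat.gcd_dvd_left N d)),
    Nat.div_div_self (Nat.gcd_dvd_left N d) hN.ne']

theorem IsPrimitiveRoot.coprime_of_pow_eq {M : Type*} [CommMonoid M] {ω ζ : M} {N d k : ℕ}
    (hω : IsPrimitiveRoot ω (d * N)) (hζ : IsPrimitiveRoot ζ N) (hd : 0 < d) (hN : 0 < N)
    (h : ω ^ d = (ζ ^ k) ^ d) : N.Coprime d := by
  set c := N.gcd d
  have hcN : c ∣ N := Nat.gcd_dvd_left N d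
  have hNc : 0 < N / c := Nat.div_pos (Nat.le_of_dvd hN hcN) (Nat.gcd_pos_of_pos_left d hN)
  have hdNc : d * (N / c) = d / c * N := by
    rw [← Nat.div_mul_cancel (Nat.gcd_dvd_right N d), mul_assoc, Nat.mul_div_cancel' hcN,
      Nat.mul_div_cancel _ (Nat.gcd_pos_of_pos_left d hN)]
  have hωc : ω ^ (d * (N / c)) = 1 := by
    rw [pow_mul, h, ← pow_mul, ← pow_mul, hdNc, ← mul_assoc, mul_comm, pow_mul, hζ.pow_eq_one,
      one_pow]
  have hdvd : N ∣ N / c :=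
    (Nat.mul_dvd_mul_iff_left hd).mp ((hω.pow_eq_one_iff_dvd _).mp hωc)
  have hself : N / c = N := le_antisymm (Nat.div_le_self N c) (Nat.le_of_dvd hNc hdvd)
  exact (Nat.div_eq_self.mp hself).resolve_left hN.ne'

theorem Polynomial.aeval_X_pow_injective {R : Type*} [CommSemiring R] {b : ℕ} (hb : 0 < b) :
    Function.Injective
      (Polynomial.aeval (R := R) ((PowerSeries.X : PowerSeries R) ^ b)).toRingHom := by
  have h : (Polynomial.aeval (R := R) ((PowerSeries.X : PowerSeries R) ^ b)).toRingHom =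
      Polynomial.coeToPowerSeries.ringHom.comp (Polynomial.expand R b).toRingHom := by
    ext <;> simp [Polynomial.coeToPowerSeries.ringHom_apply]
  rw [h]
  exact (Polynomial.coe_injective R).comp (Polynomial.expand_injective hb)

theorem Polynomial.exists_eq_of_map_prod_X_sub_C_eq {R ι : Type*} [CommRing R] [IsDomain R]
    {s : Finset ι} {f : ι → R} (ψ : R →+* R)
    (h : (∏ i ∈ s, (X - C (f i))).map ψ = ∏ i ∈ s, (X - C (f i))) {i₀ : ι} (hi₀ : i₀ ∈ s) :
    ∃ i ∈ s, ψ (f i₀) = f i := by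
  have hroot := congrArg (eval (ψ (f i₀))) h
  rw [eval_map, eval₂_at_apply, eval_prod, prod_eq_zero hi₀ (by simp), map_zero, eval_prod]
    at hroot
  obtain ⟨i, hi, hzero⟩ := prod_eq_zero_iff.mp hroot.symm
  exact ⟨i, hi, by simpa [sub_eq_zero] using hzero⟩

theorem PowerSeries.rescale_comp_aeval_X_pow {R : Type*} [CommSemiring R] {ω : R} {b : ℕ}
    (hω : ω ^ b = 1) :
    (rescale ω).comp (Polynomial.aeval (R := R) ((X : PowerSeries R) ^ b)).toRingHom =
      (Polynomial.aeval (R := R) ((X : PowerSeries R) ^ b)).toRingHom := by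
  ext <;> simp only [RingHom.comp_apply, coeff_rescale] <;> simp [coeff_C, coeff_X_pow] <;>
    split_ifs with h <;> simp [h, hω]

theorem PowerSeries.exists_rescale_eq_of_map_aeval_X_pow_eq_prod {R : Type*} [CommRing R]
    [IsDomain R] {b N : ℕ} {ω ζ : R} (hω : ω ^ b = 1) (hN : 0 < N) {σ : PowerSeries R}
    {P : Polynomial (Polynomial R)}
    (hP : P.map (Polynomial.aeval (R := R) ((X : PowerSeries R) ^ b)).toRingHom =
      ∏ k ∈ range N, (Polynomial.X - Polynomial.C (rescale (ζ ^ k) σ))) :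
    ∃ k ∈ range N, rescale ω σ = rescale (ζ ^ k) σ := by
  have hfix := congrArg (Polynomial.map (rescale ω)) hP
  rw [Polynomial.map_map, rescale_comp_aeval_X_pow hω, hP] at hfix
  simpa using Polynomial.exists_eq_of_map_prod_X_sub_C_eq (rescale ω) hfix.symm
    (mem_range.mpr hN)

theorem PowerSeries.order_sub_rescale_truncation {R : Type*} [CommRing R] [NoZeroDivisors R]
    {a : ℕ → R} {d B d' b : ℕ} {z : R}
    (hB : ∀ j, a j ≠ 0 → ¬ d ∣ j → B ≤ j) (hb : ∀ j, a j ≠ 0 → ¬ d' ∣ j → b ≤ j)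
    (hz : z ^ d' = 1) (hbB : b ≤ B) (hab : a b ≠ 0) (hzb : b = B ∨ z ^ b ≠ 1) :
    (mk a - rescale z (mk fun j => if d ∣ j ∧ j < B then a j else 0)).order = b := by
  have hcoeff : ∀ j,
      coeff j (mk a - rescale z (mk fun j => if d ∣ j ∧ j < B then a j else 0)) =
        a j - z ^ j * if d ∣ j ∧ j < B then a j else 0 := fun j => by
    simp [coeff_rescale]
  rw [order_eq_nat, hcoeff]
  refine ⟨?_, fun j hj => ?_⟩
  · rcases hbB.eq_or_lt with rfl | hlt
    · simpa using hab
    · have hdb : d ∣ b := by_contra fun h => absurd (hB b hab h) (not_le.mpr hlt)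
      rw [if_pos ⟨hdb, hlt⟩, ← one_sub_mul]
      exact mul_ne_zero (sub_ne_zero.mpr (hzb.resolve_left hlt.ne).symm) hab
  · rw [hcoeff]
    by_cases haj : a j = 0
    · simp [haj]
    have hd'j : d' ∣ j := by_contra fun h => absurd (hb j haj h) (not_le.mpr hj)
    have hdj : d ∣ j := by_contra fun h => absurd (hB j haj h) (by omega)
    obtain ⟨c, rfl⟩ := hd'j
    rw [if_pos ⟨hdj, by omega⟩, pow_mul, hz, one_pow, one_mul, sub_self]

namespace PlaneBranch

variable {β e : ℕ → ℕ}

theorem e_dvd_of_le (he : ∀ i, e i = (range (i + 1)).gcd β) {i m : ℕ} (h : i ≤ m) :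
    e m ∣ β i := by
  rw [he]
  exact gcd_dvd (mem_range.mpr (Nat.lt_succ_of_le h))

theorem e_dvd_e_of_le (he : ∀ i, e i = (range (i + 1)).gcd β) {m m' : ℕ} (h : m' ≤ m) :
    e m ∣ e m' := by
  rw [he m']
  exact dvd_gcd fun i hi => e_dvd_of_le he ((Nat.lt_succ_iff.mp (mem_range.mp hi)).trans h)

theorem e_zero (he : ∀ i, e i = (range (i + 1)).gcd β) : e 0 = β 0 := by
  simp [he]

theorem e_pos (he : ∀ i, e i = (range (i + 1)).gcd β) (hβ0 : 0 < β 0) (m : ℕ) : 0 < e m :=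
  Nat.pos_of_dvd_of_pos (e_dvd_of_le he (Nat.zero_le m)) hβ0

theorem e_mul_div_e (he : ∀ i, e i = (range (i + 1)).gcd β) (m : ℕ) :
    e m * (β 0 / e m) = β 0 :=
  Nat.mul_div_cancel' (e_dvd_of_le he (Nat.zero_le m))

theorem div_e_pos (he : ∀ i, e i = (range (i + 1)).gcd β) (hβ0 : 0 < β 0) (m : ℕ) :
    0 < β 0 / e m :=
  Nat.pos_of_mul_pos_left ((e_mul_div_e he m).symm ▸ hβ0)

theorem pow_e_eq_one (he : ∀ i, e i = (range (i + 1)).gcd β) {M : Type*} [Monoid M] {z : M}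
    {m : ℕ} (h : ∀ i ≤ m, z ^ β i = 1) : z ^ e m = 1 := by
  rw [he]
  exact Finset.pow_gcd_eq_one fun i hi => h i (Nat.lt_succ_iff.mp (mem_range.mp hi))

theorem exists_order_sub_rescale_eq (he : ∀ i, e i = (range (i + 1)).gcd β) {a : ℕ → ℂ}
    {q : ℕ} (hq1 : 1 ≤ q) (hmono : MonotoneOn β (Set.Iic q))
    (hchar : ∀ i, 1 ≤ i → i ≤ q → a (β i) ≠ 0 ∧ ∀ j, a j ≠ 0 → ¬ e (i - 1) ∣ j → β i ≤ j)
    {z : ℂ} (hz : z ^ β 0 = 1) :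
    ∃ m, 1 ≤ m ∧ m ≤ q ∧ (∀ i < q, z ^ e i = 1 ↔ i < m) ∧
      (PowerSeries.mk a - PowerSeries.rescale z
        (PowerSeries.mk fun j => if e (q - 1) ∣ j ∧ j < β q then a j else 0)).order = β m := by
  obtain ⟨m, hmq, hm⟩ := Nat.exists_forall_lt_iff_lt (p := fun i => z ^ e i = 1)
    (fun i j hij hj => pow_eq_one_of_dvd hj (e_dvd_e_of_le he hij)) q
  have hm1 : 1 ≤ m := (hm 0 hq1).mp (by rwa [e_zero he])
  have hzm : z ^ e (m - 1) = 1 := (hm (m - 1) (by omega)).mpr (by omega)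
  refine ⟨m, hm1, hmq, hm, PowerSeries.order_sub_rescale_truncation (hchar q hq1 le_rfl).2
    (hchar m hm1 hmq).2 hzm (hmono (Set.mem_Iic.mpr hmq) (Set.mem_Iic.mpr le_rfl) hmq)
    (hchar m hm1 hmq).1 ?_⟩
  rcases hmq.eq_or_lt with rfl | hlt
  · exact Or.inl rfl
  · refine Or.inr fun hzβ => lt_irrefl m ((hm m hlt).mp (pow_e_eq_one he fun i hi => ?_))
    rcases hi.eq_or_lt with rfl | hi
    · exact hzβ
    · exact pow_eq_one_of_dvd hzm (e_dvd_of_le he (by omega))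

theorem coprime_of_rescale_eq (he : ∀ i, e i = (range (i + 1)).gcd β) (hβ0 : 0 < β 0)
    {a : ℕ → ℂ} {q : ℕ} (hsupp : ∀ i, 1 ≤ i → i < q → a (β i) ≠ 0 ∧ β i < β q)
    {ζ ω : ℂ} (hζ : IsPrimitiveRoot ζ (β 0 / e (q - 1))) (hω : IsPrimitiveRoot ω (β 0)) {k : ℕ}
    (h : PowerSeries.rescale ω
        (PowerSeries.mk fun j => if e (q - 1) ∣ j ∧ j < β q then a j else 0) =
      PowerSeries.rescale (ζ ^ k)
        (PowerSeries.mk fun j => if e (q - 1) ∣ j ∧ j < β q then a j else 0)) :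
    (β 0 / e (q - 1)).Coprime (e (q - 1)) := by
  have hζk : ζ ^ k ≠ 0 := pow_ne_zero k (hζ.ne_zero (div_e_pos he hβ0 _).ne')
  have hβi : ∀ i ≤ q - 1, ω ^ β i = (ζ ^ k) ^ β i := by
    intro i hi
    rcases Nat.eq_zero_or_pos i with rfl | hi1
    · rw [hω.pow_eq_one, hζ.pow_pow_eq_one_of_dvd k (Dvd.intro_left _ (e_mul_div_e he _))]
    · have hcoeff := congrArg (PowerSeries.coeff (β i)) h
      simp only [PowerSeries.coeff_rescale, PowerSeries.coeff_mk] at hcoeff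
      rw [if_pos ⟨e_dvd_of_le he hi, (hsupp i hi1 (by omega)).2⟩] at hcoeff
      exact mul_right_cancel₀ (hsupp i hi1 (by omega)).1 hcoeff
  have hωe : ω ^ e (q - 1) = (ζ ^ k) ^ e (q - 1) := by
    rw [← div_eq_one_iff_eq (pow_ne_zero _ hζk), ← div_pow]
    exact pow_e_eq_one he fun i hi => by
      rw [div_pow, div_eq_one_iff_eq (pow_ne_zero _ hζk), hβi i hi]
  exact IsPrimitiveRoot.coprime_of_pow_eq (by rwa [e_mul_div_e he]) hζ (e_pos he hβ0 _)
    (div_e_pos he hβ0 _) hωe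

theorem e_mul_β'_eq {g : ℕ} {n β' : ℕ → ℕ} (he : ∀ i, e i = (range (i + 1)).gcd β)
    (hn : ∀ i, 1 ≤ i → n i = e (i - 1) / e i) (hβ'1 : β' 1 = β 1)
    (hβ'rec : ∀ i, 1 ≤ i → i < g → β' (i + 1) + β i = n i * β' i + β (i + 1))
    {i : ℕ} (hi1 : 1 ≤ i) (hig : i ≤ g) :
    (e (i - 1) * β' i : ℤ) = β 0 * β 1 + ∑ m ∈ Ico 1 i, e m * ((β (m + 1) : ℤ) - β m) := by
  induction i, hi1 using Nat.le_induction with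
  | base => simp [e_zero he, hβ'1]
  | succ i hi1 ih =>
    have hen : ((e i * n i : ℕ) : ℤ) = e (i - 1) := by
      rw [hn i hi1, Nat.mul_div_cancel' (e_dvd_e_of_le he (Nat.sub_le i 1))]
    have hrec : ((β' (i + 1) + β i : ℕ) : ℤ) = (n i * β' i + β (i + 1) : ℕ) :=
      congrArg _ (hβ'rec i hi1 hig)
    push_cast at hen hrec
    rw [Nat.add_sub_cancel, sum_Ico_succ_top hi1, ← add_assoc, ← ih (by omega)]
    linear_combination (e i : ℤ) * hrec + (β' i : ℤ) * hen

theorem e_mul_card_filter_pow_e_eq_one {M : Type*} [CommMonoid M] [DecidableEq M]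
    (he : ∀ i, e i = (range (i + 1)).gcd β) (hβ0 : 0 < β 0) {q i : ℕ} (hi : i ≤ q - 1) {ζ : M}
    (hζ : IsPrimitiveRoot ζ (β 0 / e (q - 1))) (hcop : (β 0 / e (q - 1)).Coprime (e (q - 1))) :
    e (q - 1) * #{k ∈ range (β 0 / e (q - 1)) | (ζ ^ k) ^ e i = 1} = e i := by
  obtain ⟨u, hu⟩ := e_dvd_e_of_le he hi
  have huN : u ∣ β 0 / e (q - 1) := by
    have := e_dvd_of_le he (Nat.zero_le i)
    rwa [← e_mul_div_e he (q - 1), hu, Nat.mul_dvd_mul_iff_left (e_pos he hβ0 _)] at this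
  rw [hζ.card_filter_range_pow_eq_one (div_e_pos he hβ0 _), hu,
    Nat.Coprime.gcd_mul_left_cancel_right u hcop.symm, Nat.gcd_eq_right huN]

theorem sum_β_eq_β' {M : Type*} [CommMonoid M] [DecidableEq M] {g q : ℕ}
    {n β' m : ℕ → ℕ} (he : ∀ i, e i = (range (i + 1)).gcd β) (hβ0 : 0 < β 0)
    (hn : ∀ i, 1 ≤ i → n i = e (i - 1) / e i) (hβ'1 : β' 1 = β 1)
    (hβ'rec : ∀ i, 1 ≤ i → i < g → β' (i + 1) + β i = n i * β' i + β (i + 1))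
    (hq1 : 1 ≤ q) (hqg : q ≤ g) {ζ : M} (hζ : IsPrimitiveRoot ζ (β 0 / e (q - 1)))
    (hcop : (β 0 / e (q - 1)).Coprime (e (q - 1))) (hm1 : ∀ k, 1 ≤ m k) (hmq : ∀ k, m k ≤ q)
    (hm : ∀ k, ∀ i < q, (ζ ^ k) ^ e i = 1 ↔ i < m k) :
    ∑ k ∈ range (β 0 / e (q - 1)), β (m k) = β' q := by
  have hlayer : ∀ k, (β (m k) : ℤ) =
      β 1 + ∑ i ∈ Ico 1 q, if (ζ ^ k) ^ e i = 1 then (β (i + 1) : ℤ) - β i else 0 := fun k => by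
    rw [sum_Ico_ite_sub_eq (fun i => (β i : ℤ)) (hm1 k) (hmq k) (hm k)]
    ring
  have hcount : ∀ i ∈ Ico 1 q,
      (e (q - 1) : ℤ) * #{k ∈ range (β 0 / e (q - 1)) | (ζ ^ k) ^ e i = 1} = e i :=
    fun i hi => by
      exact_mod_cast e_mul_card_filter_pow_e_eq_one he hβ0
        (Nat.le_sub_one_of_lt (mem_Ico.mp hi).2) hζ hcop
  have hN : (e (q - 1) : ℤ) * (β 0 / e (q - 1) : ℕ) = β 0 := by
    exact_mod_cast e_mul_div_e he (q - 1)
  apply Nat.cast_injective (R := ℤ)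
  apply mul_left_cancel₀ (Int.natCast_ne_zero.mpr (e_pos he hβ0 (q - 1)).ne')
  push_cast
  rw [e_mul_β'_eq he hn hβ'1 hβ'rec hq1 hqg, sum_congr rfl fun k _ => hlayer k, sum_add_distrib,
    sum_comm, sum_const, card_range, nsmul_eq_mul, mul_add, mul_sum, ← mul_assoc, hN]
  congr 1
  refine sum_congr rfl fun i hi => ?_
  rw [← sum_filter, sum_const, nsmul_eq_mul, ← mul_assoc, hcount i hi]

end PlaneBranch

open PlaneBranch in
theorem semiroot_monic_degree_contact_general
    (g q : ℕ) (hq1 : 1 ≤ q) (hqg : q ≤ g)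
    -- the coefficients of the Puiseux series of `C`
    (a : ℕ → ℂ) (β : ℕ → ℕ) (hβmono : ∀ i, i < g → β i < β (i + 1)) (hβ0 : 0 < β 0)
    (ha0 : ∀ j, j < β 0 → a j = 0)
    (e : ℕ → ℕ) (he : ∀ i, e i = Finset.gcd (Finset.range (i + 1)) β)
    -- `β_i` (for `1 ≤ i ≤ g`) are the characteristic exponents of the series
    (hchar : ∀ i, 1 ≤ i → i ≤ g →
      a (β i) ≠ 0 ∧ ¬ e (i - 1) ∣ β i ∧ ∀ j, a j ≠ 0 → ¬ e (i - 1) ∣ j → β i ≤ j)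
    -- the generators `β̄` of the value semigroup
    (n : ℕ → ℕ) (hn : ∀ i, 1 ≤ i → n i = e (i - 1) / e i)
    (β' : ℕ → ℕ) (hβ'1 : β' 1 = β 1)
    (hβ'rec : ∀ i, 1 ≤ i → i < g → β' (i + 1) + β i = n i * β' i + β (i + 1))
    -- the truncated series `σ` (i.e. `s_q(x)` written in the variable `t`, `x = t^{β₀}`)
    (σ : PowerSeries ℂ)
    (hσ : σ = PowerSeries.mk fun j => if e (q - 1) ∣ j ∧ j < β q then a j else 0)
    -- a primitive `β₀/e_{q−1}`-th root of unity
    (ζ : ℂ) (hζ : IsPrimitiveRoot ζ (β 0 / e (q - 1)))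
    -- the polynomial `g_q ∈ ℂ[x][y]`, characterized by its image under `x ↦ t^{β₀}`
    (gq : Polynomial (Polynomial ℂ))
    (hgq : Polynomial.map (Polynomial.aeval
        ((PowerSeries.X : PowerSeries ℂ) ^ β 0)).toRingHom gq =
      ∏ k ∈ Finset.range (β 0 / e (q - 1)),
        (Polynomial.X - Polynomial.C (PowerSeries.rescale (ζ ^ k) σ))) :
    gq.Monic ∧ gq.natDegree = β 0 / e (q - 1) ∧
    PowerSeries.order
      (Polynomial.eval (PowerSeries.mk fun j => if β 0 ≤ j then a j else 0)
        (Polynomial.map (Polynomial.aeval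
          ((PowerSeries.X : PowerSeries ℂ) ^ β 0)).toRingHom gq)) =
      (β' q : ℕ∞) := by
  have hinj := Polynomial.aeval_X_pow_injective (R := ℂ) hβ0
  have hstrict : StrictMonoOn β (Set.Iic q) :=
    (strictMonoOn_Iic_of_lt_succ hβmono).mono (Set.Iic_subset_Iic.mpr hqg)
  have hcharq : ∀ i, 1 ≤ i → i ≤ q → a (β i) ≠ 0 ∧ ∀ j, a j ≠ 0 → ¬ e (i - 1) ∣ j → β i ≤ j :=
    fun i hi1 hiq => ⟨(hchar i hi1 (hiq.trans hqg)).1, (hchar i hi1 (hiq.trans hqg)).2.2⟩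
  have hcop : (β 0 / e (q - 1)).Coprime (e (q - 1)) := by
    have hω := Complex.isPrimitiveRoot_exp (β 0) hβ0.ne'
    obtain ⟨k, -, hk⟩ :=
      PowerSeries.exists_rescale_eq_of_map_aeval_X_pow_eq_prod hω.pow_eq_one
        (div_e_pos he hβ0 _) hgq
    exact coprime_of_rescale_eq he hβ0 (fun i hi1 hiq => ⟨(hcharq i hi1 hiq.le).1,
      hstrict (Set.mem_Iic.mpr hiq.le) (Set.mem_Iic.mpr le_rfl) hiq⟩) hζ hω (hσ ▸ hk)
  have hf : (PowerSeries.mk fun j => if β 0 ≤ j then a j else 0) = PowerSeries.mk a := by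
    ext j
    simp only [PowerSeries.coeff_mk, ite_eq_left_iff, not_le]
    exact fun hj => (ha0 j hj).symm
  refine ⟨Polynomial.monic_of_injective hinj (hgq ▸ Polynomial.monic_prod_X_sub_C _ _),
    by rw [← Polynomial.natDegree_map_eq_of_injective hinj, hgq,
      Polynomial.natDegree_finsetProd_X_sub_C_eq_card, card_range], ?_⟩
  choose m hm1 hmq hm hord using fun k : ℕ =>
    exists_order_sub_rescale_eq he hq1 hstrict.monotoneOn hcharq
      (hζ.pow_pow_eq_one_of_dvd k (Nat.div_dvd_of_dvd (e_dvd_of_le he (Nat.zero_le _))))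
  rw [hgq, hf, Polynomial.eval_prod, PowerSeries.order_prod]
  simp only [Polynomial.eval_sub, Polynomial.eval_X, Polynomial.eval_C, hσ, hord]
  rw [← Nat.cast_sum, sum_β_eq_β' he hβ0 hn hβ'1 hβ'rec hq1 hqg hζ hcop hm1 hmq hm]

/-- Let `C` be an irreducible plane curve with Newton–Puiseux
parametrization `(t^{β₀}, ∑_{j≥β₀} a_j t^j)`, characteristic exponents `β₀ < β₁ < ⋯ < β_g`,
`e_i = gcd(β₀,…,β_i)` and semigroup generators `β̄₀,…,β̄_g` (with
`β̄_{i+1} = n_i β̄_i + β_{i+1} − β_i`).  Let `g_q ∈ ℂ[x,y]` be the minimal polynomial of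
the truncation `s_q(x)` of the Puiseux series of `C`, given by
`g_q(x,y) = ∏_{ε^{β₀/e_{q−1}} = 1} (y − s_q(ε^{β₀} x))` (expressed below after the
substitution `x ↦ t^{β₀}`, under which `s_q(ε^{β₀}x)` becomes the rescaled truncated
series `σ(εt)`).  Then `g_q` is monic in `y` with `deg_y g_q = β₀/e_{q−1}`, and the branch
`D_q` defined by `g_q` has maximal contact of genus `q − 1` with `C`:
`[C, D_q]₀ = ord_t g_q(t^{β₀}, ∑_{j≥β₀} a_j t^j) = β̄_q`. -/
theorem semiroot_monic_degree_contact
    (g q : ℕ) (hq1 : 1 ≤ q) (hqg : q ≤ g)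
    -- the coefficients of the Puiseux series of `C`
    (a : ℕ → ℂ) (β : ℕ → ℕ) (hβmono : ∀ i, i < g → β i < β (i + 1)) (hβ0 : 0 < β 0)
    (ha0 : ∀ j, j < β 0 → a j = 0)
    (e : ℕ → ℕ) (he : ∀ i, e i = Finset.gcd (Finset.range (i + 1)) β) (heg : e g = 1)
    -- `β_i` (for `1 ≤ i ≤ g`) are the characteristic exponents of the series
    (hchar : ∀ i, 1 ≤ i → i ≤ g →
      a (β i) ≠ 0 ∧ ¬ e (i - 1) ∣ β i ∧ ∀ j, a j ≠ 0 → ¬ e (i - 1) ∣ j → β i ≤ j)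
    -- the generators `β̄` of the value semigroup
    (n : ℕ → ℕ) (hn : ∀ i, 1 ≤ i → n i = e (i - 1) / e i)
    (β' : ℕ → ℕ) (hβ'0 : β' 0 = β 0) (hβ'1 : β' 1 = β 1)
    (hβ'rec : ∀ i, 1 ≤ i → i < g → β' (i + 1) + β i = n i * β' i + β (i + 1))
    -- the truncated series `σ` (i.e. `s_q(x)` written in the variable `t`, `x = t^{β₀}`)
    (σ : PowerSeries ℂ)
    (hσ : σ = PowerSeries.mk fun j => if e (q - 1) ∣ j ∧ j < β q then a j else 0)
    -- a primitive `β₀/e_{q−1}`-th root of unity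
    (ζ : ℂ) (hζ : IsPrimitiveRoot ζ (β 0 / e (q - 1)))
    -- the polynomial `g_q ∈ ℂ[x][y]`, characterized by its image under `x ↦ t^{β₀}`
    (gq : Polynomial (Polynomial ℂ))
    (hgq : Polynomial.map (Polynomial.aeval
        ((PowerSeries.X : PowerSeries ℂ) ^ β 0)).toRingHom gq =
      ∏ k ∈ Finset.range (β 0 / e (q - 1)),
        (Polynomial.X - Polynomial.C (PowerSeries.rescale (ζ ^ k) σ))) :
    gq.Monic ∧ gq.natDegree = β 0 / e (q - 1) ∧
    PowerSeries.order
      (Polynomial.eval (PowerSeries.mk fun j => if β 0 ≤ j then a j else 0)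
        (Polynomial.map (Polynomial.aeval
          ((PowerSeries.X : PowerSeries ℂ) ^ β 0)).toRingHom gq)) =
      (β' q : ℕ∞) :=
  semiroot_monic_degree_contact_general g q hq1 hqg a β hβmono hβ0 ha0 e he hchar n hn β' hβ'1
    hβ'rec σ hσ ζ hζ gq hgq
end

section
/- Let E ⊆ ℤ² be a value set with minimum m_E and γ ≥ 𝐜_E, and suppose E ⊇ γ' + ℕ² for all γ' ≥ 𝐜_E. Then for α = m_E the additivity d_E(m_E, γ) = d_E(m_E, 𝐜_E) + d_E(𝐜_E, γ) holds, and d_E(𝐜_E, γ) = (γ₁ − (𝐜_E)₁) + (γ₂ − (𝐜_E)₂). -/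
/-- A saturated chain of length `n` in `E ⊆ ℤ²` from `a` to `b`. -/
def IsSatChainZ2 (E : Set (ℤ × ℤ)) (a b : ℤ × ℤ) (n : ℕ) : Prop :=
  ∃ α : ℕ → ℤ × ℤ, α 0 = a ∧ α n = b ∧ (∀ i ≤ n, α i ∈ E) ∧
    (∀ i < n, α i < α (i + 1)) ∧
    ∀ i < n, ∀ ε ∈ E, ¬ (α i < ε ∧ ε < α (i + 1))

namespace SatAux

def Covers (E : Set (ℤ × ℤ)) (a e : ℤ × ℤ) : Prop :=
  a < e ∧ ∀ η ∈ E, ¬ (a < η ∧ η < e)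

lemma lt_coord {x y : ℤ × ℤ} :
    x < y ↔ x.1 ≤ y.1 ∧ x.2 ≤ y.2 ∧ (x.1 ≠ y.1 ∨ x.2 ≠ y.2) := by
  rw [lt_iff_le_and_ne, Prod.le_def, Ne, Prod.ext_iff]
  tauto

/-- Core of the diamond lemma, assuming `e` goes up and `e'` goes right. -/
lemma diamond_core {E : Set (ℤ × ℤ)}
    (hmincl : ∀ a ∈ E, ∀ b ∈ E, (min a.1 b.1, min a.2 b.2) ∈ E)
    (hexch1 : ∀ a ∈ E, ∀ b ∈ E, a.1 = b.1 → a.2 ≠ b.2 →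
      ∃ ε ∈ E, a.1 < ε.1 ∧ ε.2 = min a.2 b.2)
    (hexch2 : ∀ a ∈ E, ∀ b ∈ E, a.2 = b.2 → a.1 ≠ b.1 →
      ∃ ε ∈ E, a.2 < ε.2 ∧ ε.1 = min a.1 b.1)
    {a b e e' : ℤ × ℤ} (hb : b ∈ E) (he : e ∈ E) (he' : e' ∈ E)
    (hcov : Covers E a e) (hcov' : Covers E a e')
    (heb : e ≤ b) (heb' : e' ≤ b)
    (h1 : e.1 = a.1) (h2 : a.2 < e.2) (h3 : a.1 < e'.1) (h4 : e'.2 = a.2) :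
    ∃ d ∈ E, d ≤ b ∧ Covers E e d ∧ Covers E e' d := by
  classical
  set U : Set (ℤ × ℤ) := {u | u ∈ E ∧ e ≤ u ∧ e' ≤ u ∧ u ≤ b} with hU
  have hUfin : U.Finite := (Set.finite_Icc e b).subset (fun u hu => Set.mem_Icc.mpr ⟨hu.2.1, hu.2.2.2⟩)
  have hbU : b ∈ U := ⟨hb, heb, heb', le_rfl⟩
  have hFne : hUfin.toFinset.Nonempty := ⟨b, hUfin.mem_toFinset.mpr hbU⟩
  set d : ℤ × ℤ := hUfin.toFinset.inf' hFne id with hd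
  have hinfcl : ∀ x ∈ E, ∀ y ∈ E, x ⊓ y ∈ E := by
    intro x hx y hy
    have hxy : x ⊓ y = (min x.1 y.1, min x.2 y.2) := rfl
    rw [hxy]; exact hmincl x hx y hy
  have hdE : d ∈ E := Finset.inf'_mem E hinfcl _ hFne id
    (fun u hu => (hUfin.mem_toFinset.mp hu).1)
  have hd_le : ∀ u ∈ U, d ≤ u := fun u hu => Finset.inf'_le id (hUfin.mem_toFinset.mpr hu)
  have hed : e ≤ d := Finset.le_inf' hFne id (fun u hu => (hUfin.mem_toFinset.mp hu).2.1)
  have he'd : e' ≤ d := Finset.le_inf' hFne id (fun u hu => (hUfin.mem_toFinset.mp hu).2.2.1)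
  have hdb : d ≤ b := hd_le b hbU
  have hene' : e ≠ e' := by
    intro h; rw [h] at h1; omega
  have hedlt : e < d := by
    refine lt_of_le_of_ne hed (fun h => ?_)
    have : e' < e := lt_of_le_of_ne (by rw [h]; exact he'd) (Ne.symm hene')
    exact hcov.2 e' he' ⟨hcov'.1, this⟩
  have he'dlt : e' < d := by
    refine lt_of_le_of_ne he'd (fun h => ?_)
    have : e < e' := lt_of_le_of_ne (by rw [h]; exact hed) hene'
    exact hcov'.2 e he ⟨hcov.1, this⟩
  refine ⟨d, hdE, hdb, ⟨hedlt, ?_⟩, ⟨he'dlt, ?_⟩⟩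
  · -- d covers e
    rintro η hη ⟨hh1, hh2⟩
    have hc1 : e.1 ≤ η.1 ∧ e.2 ≤ η.2 := by rw [lt_coord] at hh1; tauto
    have hηb : η ≤ b := le_of_lt (lt_of_lt_of_le hh2 hdb)
    by_cases hx : e'.1 ≤ η.1
    · have hηU : η ∈ U := ⟨hη, le_of_lt hh1, by rw [Prod.le_def]; omega, hηb⟩
      exact lt_irrefl η (lt_of_lt_of_le hh2 (hd_le η hηU))
    · push_neg at hx
      by_cases hx2 : a.1 < η.1
      · -- min of η and e' lies strictly between a and e'
        have hm := hmincl η hη e' he'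
        refine hcov'.2 _ hm ⟨?_, ?_⟩ <;> rw [lt_coord] <;> simp <;> omega
      · -- η is vertically above e; use exchange
        have hη1 : η.1 = a.1 := by omega
        have hη2 : e.2 < η.2 := by
          rcases (lt_coord.mp hh1).2.2 with h | h
          · omega
          · omega
        obtain ⟨ε, hεE, hε1, hε2⟩ := hexch1 e he η hη (by omega) (by omega)
        have hε2' : ε.2 = e.2 := by rw [hε2]; omega
        -- ε.1 ≥ e'.1, else min ε e' strictly between a and e'
        have hεge : e'.1 ≤ ε.1 := by
          by_contra hlt
          push_neg at hlt
          have hm := hmincl ε hεE e' he'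
          refine hcov'.2 _ hm ⟨?_, ?_⟩ <;> rw [lt_coord] <;> simp <;> omega
        -- w = min ε b is in U, so d ≤ w, contradicting η.2 > e.2
        have hw := hmincl ε hεE b hb
        have hwU : (min ε.1 b.1, min ε.2 b.2) ∈ U := by
          refine ⟨hw, ?_, ?_, ?_⟩ <;> rw [Prod.le_def] <;> simp <;>
            rw [Prod.le_def] at heb heb' <;> omega
        have := hd_le _ hwU
        rw [Prod.le_def] at this
        have hd2 : d.2 ≤ e.2 := by simp at this; omega
        have : η.2 ≤ d.2 := (Prod.le_def.mp (le_of_lt hh2)).2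
        omega
  · -- d covers e'
    rintro η hη ⟨hh1, hh2⟩
    have hc1 : e'.1 ≤ η.1 ∧ e'.2 ≤ η.2 := by rw [lt_coord] at hh1; tauto
    have hηb : η ≤ b := le_of_lt (lt_of_lt_of_le hh2 hdb)
    by_cases hx : e.2 ≤ η.2
    · have hηU : η ∈ U := ⟨hη, by rw [Prod.le_def]; omega, le_of_lt hh1, hηb⟩
      exact lt_irrefl η (lt_of_lt_of_le hh2 (hd_le η hηU))
    · push_neg at hx
      by_cases hx2 : a.2 < η.2
      · have hm := hmincl η hη e he
        refine hcov.2 _ hm ⟨?_, ?_⟩ <;> rw [lt_coord] <;> simp <;> omega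
      · have hη2 : η.2 = a.2 := by omega
        have hη1 : e'.1 < η.1 := by
          rcases (lt_coord.mp hh1).2.2 with h | h
          · omega
          · omega
        obtain ⟨ε, hεE, hε1, hε2⟩ := hexch2 e' he' η hη (by omega) (by omega)
        have hε2' : ε.1 = e'.1 := by rw [hε2]; omega
        have hεge : e.2 ≤ ε.2 := by
          by_contra hlt
          push_neg at hlt
          have hm := hmincl ε hεE e he
          refine hcov.2 _ hm ⟨?_, ?_⟩ <;> rw [lt_coord] <;> simp <;> omega
        have hw := hmincl ε hεE b hb
        have hwU : (min ε.1 b.1, min ε.2 b.2) ∈ U := by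
          refine ⟨hw, ?_, ?_, ?_⟩ <;> rw [Prod.le_def] <;> simp <;>
            rw [Prod.le_def] at heb heb' <;> omega
        have := hd_le _ hwU
        rw [Prod.le_def] at this
        have hd1 : d.1 ≤ e'.1 := by simp at this; omega
        have : η.1 ≤ d.1 := (Prod.le_def.mp (le_of_lt hh2)).1
        omega

lemma sum_lt {x y : ℤ × ℤ} (h : x < y) : x.1 + x.2 < y.1 + y.2 := by
  rcases Prod.lt_iff.mp h with ⟨h1, h2⟩ | ⟨h1, h2⟩ <;> omega

lemma chain_mono {α : ℕ → ℤ × ℤ} {n : ℕ} (h : ∀ i < n, α i < α (i + 1)) :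
    ∀ i j, i < j → j ≤ n → α i < α j := by
  intro i j hij hjn
  induction j with
  | zero => omega
  | succ k ih =>
    rcases Nat.lt_succ_iff_lt_or_eq.mp hij with hc | hc
    · exact lt_trans (ih hc (by omega)) (h k (by omega))
    · subst hc; exact h i (by omega)

lemma chain_zero {E a b} (h : IsSatChainZ2 E a b 0) : a = b := by
  obtain ⟨α, h0, hn, -⟩ := h; rw [← h0, hn]

lemma chain_lt {E a b n} (h : IsSatChainZ2 E a b n) (hn : 0 < n) : a < b := by
  obtain ⟨α, h0, hend, -, hmono, -⟩ := h
  rw [← h0, ← hend]; exact chain_mono hmono 0 n hn le_rfl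

lemma chain_self {E a n} (h : IsSatChainZ2 E a a n) : n = 0 := by
  by_contra hn
  exact absurd (chain_lt h (Nat.pos_of_ne_zero hn)) (lt_irrefl a)

lemma chain_mem_right {E a b n} (h : IsSatChainZ2 E a b n) : b ∈ E := by
  obtain ⟨α, -, hend, hmem, -⟩ := h; rw [← hend]; exact hmem n le_rfl

lemma chain_tail {E a b n} (h : IsSatChainZ2 E a b (n + 1)) :
    ∃ e, e ∈ E ∧ Covers E a e ∧ e ≤ b ∧ IsSatChainZ2 E e b n := by
  obtain ⟨α, h0, hend, hmem, hmono, hsat⟩ := h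
  refine ⟨α 1, hmem 1 (by omega), ⟨by rw [← h0]; exact hmono 0 (by omega),
    fun η hη hc => hsat 0 (by omega) η hη (by rwa [h0])⟩, ?_, ?_⟩
  · rw [← hend]
    rcases Nat.eq_or_lt_of_le (Nat.one_le_iff_ne_zero.mpr (Nat.succ_ne_zero n) :
        1 ≤ n + 1) with hc | hc
    · have hn0 : n = 0 := by omega
      subst hn0; exact le_rfl
    · exact le_of_lt (chain_mono hmono 1 (n + 1) hc le_rfl)
  · exact ⟨fun i => α (i + 1), rfl, hend, fun i hi => hmem (i + 1) (by omega),
      fun i hi => hmono (i + 1) (by omega), fun i hi => hsat (i + 1) (by omega)⟩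

lemma chain_cons {E a e b n} (ha : a ∈ E) (hcov : Covers E a e)
    (h : IsSatChainZ2 E e b n) : IsSatChainZ2 E a b (n + 1) := by
  obtain ⟨α, h0, hend, hmem, hmono, hsat⟩ := h
  refine ⟨fun i => match i with | 0 => a | (j + 1) => α j, rfl, hend, ?_, ?_, ?_⟩
  · intro i hi
    match i with
    | 0 => exact ha
    | (j + 1) => exact hmem j (by omega)
  · intro i hi
    match i with
    | 0 => show a < α 0; rw [h0]; exact hcov.1
    | (j + 1) => exact hmono j (by omega)
  · intro i hi η hη
    match i with
    | 0 => show ¬ (a < η ∧ η < α 0); rw [h0]; exact hcov.2 η hη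
    | (j + 1) => exact hsat j (by omega) η hη

lemma chain_append {E a c b p q} (h1 : IsSatChainZ2 E a c p)
    (h2 : IsSatChainZ2 E c b q) : IsSatChainZ2 E a b (p + q) := by
  induction p generalizing a with
  | zero => rw [chain_zero h1]; simpa using h2
  | succ k ih =>
    obtain ⟨e, heE, hcov, -, htail⟩ := chain_tail h1
    have := chain_cons (by
      obtain ⟨α, h0, -, hmem, -⟩ := h1
      rw [← h0]; exact hmem 0 (by omega)) hcov (ih htail)
    have heq : k + q + 1 = k + 1 + q := by omega
    rwa [heq] at this


/-- Full diamond lemma: two distinct covers of `a` below `b` admit a common cover below `b`. -/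
lemma diamond {E : Set (ℤ × ℤ)}
    (hmincl : ∀ a ∈ E, ∀ b ∈ E, (min a.1 b.1, min a.2 b.2) ∈ E)
    (hexch1 : ∀ a ∈ E, ∀ b ∈ E, a.1 = b.1 → a.2 ≠ b.2 →
      ∃ ε ∈ E, a.1 < ε.1 ∧ ε.2 = min a.2 b.2)
    (hexch2 : ∀ a ∈ E, ∀ b ∈ E, a.2 = b.2 → a.1 ≠ b.1 →
      ∃ ε ∈ E, a.2 < ε.2 ∧ ε.1 = min a.1 b.1)
    {a b e e' : ℤ × ℤ} (hb : b ∈ E) (he : e ∈ E) (he' : e' ∈ E)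
    (hcov : Covers E a e) (hcov' : Covers E a e') (hne : e ≠ e')
    (heb : e ≤ b) (heb' : e' ≤ b) :
    ∃ d ∈ E, d ≤ b ∧ Covers E e d ∧ Covers E e' d := by
  have hnc1 : ¬ e ≤ e' := fun h => hcov'.2 e he ⟨hcov.1, lt_of_le_of_ne h hne⟩
  have hnc2 : ¬ e' ≤ e := fun h => hcov.2 e' he' ⟨hcov'.1, lt_of_le_of_ne h (Ne.symm hne)⟩
  rw [Prod.le_def] at hnc1 hnc2
  push_neg at hnc1 hnc2
  have hae := Prod.le_def.mp (le_of_lt hcov.1)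
  have hae' := Prod.le_def.mp (le_of_lt hcov'.1)
  have hm := hmincl e he e' he'
  rcases lt_or_ge e.1 e'.1 with hcase | hcase
  · -- e goes up, e' goes right
    have h22 : e'.2 < e.2 := by
      have := hnc1 (le_of_lt hcase); omega
    have hmlt : (min e.1 e'.1, min e.2 e'.2) < e := by
      rw [lt_coord]; simp; omega
    have hma : a = (min e.1 e'.1, min e.2 e'.2) := by
      by_contra hne'
      exact hcov.2 _ hm ⟨lt_of_le_of_ne (by rw [Prod.le_def]; simp; omega) hne', hmlt⟩
    have h1 : e.1 = a.1 := by
      have := congrArg Prod.fst hma; simp at this; omega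
    have h4 : e'.2 = a.2 := by
      have := congrArg Prod.snd hma; simp at this; omega
    exact diamond_core hmincl hexch1 hexch2 hb he he' hcov hcov' heb heb'
      h1 (by omega) (by omega) h4
  · -- e goes right, e' goes up
    have h11 : e'.1 < e.1 := by
      rcases lt_or_eq_of_le hcase with h | h
      · exact h
      · exfalso
        have t1 := hnc1 (le_of_eq h.symm)
        have t2 := hnc2 (le_of_eq h)
        omega
    have h22 : e.2 < e'.2 := by
      have := hnc2 (le_of_lt h11); omega
    have hmlt : (min e.1 e'.1, min e.2 e'.2) < e' := by
      rw [lt_coord]; simp; omega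
    have hma : a = (min e.1 e'.1, min e.2 e'.2) := by
      by_contra hne'
      exact hcov'.2 _ hm ⟨lt_of_le_of_ne (by rw [Prod.le_def]; simp; omega) hne', hmlt⟩
    have h1 : e'.1 = a.1 := by
      have := congrArg Prod.fst hma; simp at this; omega
    have h4 : e.2 = a.2 := by
      have := congrArg Prod.snd hma; simp at this; omega
    obtain ⟨d, hdE, hdb, c1, c2⟩ := diamond_core hmincl hexch1 hexch2 hb he' he hcov' hcov heb' heb
      h1 (by omega) (by omega) h4
    exact ⟨d, hdE, hdb, c2, c1⟩

/-- Existence of saturated chains between comparable elements of `E`. -/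
lemma chain_exists_aux {E : Set (ℤ × ℤ)} :
    ∀ N : ℕ, ∀ a b : ℤ × ℤ, a ∈ E → b ∈ E → a ≤ b →
      (b.1 + b.2 - (a.1 + a.2)).toNat ≤ N → ∃ n, IsSatChainZ2 E a b n := by
  intro N
  induction N with
  | zero =>
    intro a b ha hb hab hN
    have hc := Prod.le_def.mp hab
    have : a = b := by
      rw [Prod.ext_iff]; omega
    subst this
    exact ⟨0, fun _ => a, rfl, rfl, fun i _ => ha, fun i hi => by omega, fun i hi => by omega⟩
  | succ N ih =>
    intro a b ha hb hab hN
    by_cases heq : a = b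
    · subst heq
      exact ⟨0, fun _ => a, rfl, rfl, fun i _ => ha, fun i hi => by omega, fun i hi => by omega⟩
    · have hlt : a < b := lt_of_le_of_ne hab heq
      set S : Set (ℤ × ℤ) := {e | e ∈ E ∧ a < e ∧ e ≤ b} with hS
      have hSfin : S.Finite := (Set.finite_Icc a b).subset
        (fun u hu => Set.mem_Icc.mpr ⟨le_of_lt hu.2.1, hu.2.2⟩)
      have hbS : b ∈ S := ⟨hb, hlt, le_rfl⟩
      obtain ⟨e, heF, hemin⟩ := Finset.exists_min_image hSfin.toFinset (fun u => u.1 + u.2)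
        ⟨b, hSfin.mem_toFinset.mpr hbS⟩
      obtain ⟨heE, hale, heb⟩ := hSfin.mem_toFinset.mp heF
      have hcov : Covers E a e := by
        refine ⟨hale, fun η hη hc => ?_⟩
        have hηS : η ∈ S := ⟨hη, hc.1, le_trans (le_of_lt hc.2) heb⟩
        have := hemin η (hSfin.mem_toFinset.mpr hηS)
        have := sum_lt hc.2
        omega
      have hsa := sum_lt hale
      have hsb := Prod.le_def.mp heb
      obtain ⟨n, hn⟩ := ih e b heE hb heb (by omega)
      exact ⟨n + 1, chain_cons ha hcov hn⟩

lemma chain_exists {E : Set (ℤ × ℤ)} {a b : ℤ × ℤ} (ha : a ∈ E) (hb : b ∈ E)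
    (hab : a ≤ b) : ∃ n, IsSatChainZ2 E a b n :=
  chain_exists_aux (b.1 + b.2 - (a.1 + a.2)).toNat a b ha hb hab le_rfl

/-- Uniqueness of the length of saturated chains. -/
lemma chain_unique {E : Set (ℤ × ℤ)}
    (hmincl : ∀ a ∈ E, ∀ b ∈ E, (min a.1 b.1, min a.2 b.2) ∈ E)
    (hexch1 : ∀ a ∈ E, ∀ b ∈ E, a.1 = b.1 → a.2 ≠ b.2 →
      ∃ ε ∈ E, a.1 < ε.1 ∧ ε.2 = min a.2 b.2)
    (hexch2 : ∀ a ∈ E, ∀ b ∈ E, a.2 = b.2 → a.1 ≠ b.1 →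
      ∃ ε ∈ E, a.2 < ε.2 ∧ ε.1 = min a.1 b.1) :
    ∀ n : ℕ, ∀ a b : ℤ × ℤ, ∀ m : ℕ,
      IsSatChainZ2 E a b n → IsSatChainZ2 E a b m → m = n := by
  intro n
  induction n using Nat.strong_induction_on with
  | _ n ih =>
    intro a b m h1 h2
    match n, ih with
    | 0, _ => rw [chain_zero h1] at h2; exact chain_self h2
    | (n + 1), ih =>
      have hab : a < b := chain_lt h1 (by omega)
      obtain ⟨e, heE, hcov, heb, h1'⟩ := chain_tail h1
      match m with
      | 0 => exact absurd (chain_zero h2) (ne_of_lt hab)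
      | (m + 1) =>
        obtain ⟨e', he'E, hcov', he'b, h2'⟩ := chain_tail h2
        by_cases hee : e = e'
        · subst hee
          have := ih n (by omega) e b m h1' h2'
          omega
        · have hbE : b ∈ E := chain_mem_right h1
          obtain ⟨d, hdE, hdb, c1, c2⟩ :=
            diamond hmincl hexch1 hexch2 hbE heE he'E hcov hcov' hee heb he'b
          obtain ⟨k, hk⟩ := chain_exists hdE hbE hdb
          have hkc : IsSatChainZ2 E e b (k + 1) := chain_cons heE c1 hk
          have hn : k + 1 = n := ih n (by omega) e b (k + 1) h1' hkc
          have hkc' : IsSatChainZ2 E e' b (k + 1) := chain_cons he'E c2 hk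
          rw [hn] at hkc'
          have := ih n (by omega) e' b m hkc' h2'
          omega

/-- Past the conductor, a saturated chain has length equal to the coordinate-sum difference. -/
lemma chain_sum {E : Set (ℤ × ℤ)} {cE : ℤ × ℤ}
    (hcE : ∀ γ' : ℤ × ℤ, cE ≤ γ' → γ' ∈ E) :
    ∀ q : ℕ, ∀ a b : ℤ × ℤ, cE ≤ a → IsSatChainZ2 E a b q →
      (q : ℤ) = (b.1 - a.1) + (b.2 - a.2) := by
  intro q
  induction q with
  | zero =>
    intro a b hca h
    rw [← chain_zero h]; simp
  | succ k ih =>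
    intro a b hca h
    obtain ⟨e, heE, hcov, heb, ht⟩ := chain_tail h
    have hae := lt_coord.mp hcov.1
    have hca' : cE ≤ e := le_trans hca (le_of_lt hcov.1)
    have hIH := ih e b hca' ht
    have hcc := Prod.le_def.mp hca
    have hstep : e.1 + e.2 = a.1 + a.2 + 1 := by
      by_contra hs
      have hsum := sum_lt hcov.1
      by_cases hx : a.1 < e.1
      · refine hcov.2 (a.1 + 1, a.2) (hcE _ ?_) ⟨?_, ?_⟩
        · rw [Prod.le_def]; simp; omega
        · rw [lt_coord]; simp <;> omega
        · rw [lt_coord]; simp <;> omega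
      · refine hcov.2 (a.1, a.2 + 1) (hcE _ ?_) ⟨?_, ?_⟩
        · rw [Prod.le_def]; simp; omega
        · rw [lt_coord]; simp <;> omega
        · rw [lt_coord]; simp <;> omega
    push_cast
    omega

end SatAux

/-- Let `E ⊆ ℤ²` be a value set (closed under componentwise min, with the
exchange property), with minimum `m_E` and conductor `𝐜_E`, such that `E` contains every
point `≥ 𝐜_E`, and let `γ ≥ 𝐜_E`.  Then the additivity
`d_E(m_E, γ) = d_E(m_E, 𝐜_E) + d_E(𝐜_E, γ)` holds, and
`d_E(𝐜_E, γ) = (γ₁ − (𝐜_E)₁) + (γ₂ − (𝐜_E)₂)`. -/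
theorem distance_additivity_past_conductor
    (E : Set (ℤ × ℤ))
    (hmincl : ∀ a ∈ E, ∀ b ∈ E, (min a.1 b.1, min a.2 b.2) ∈ E)
    (hexch1 : ∀ a ∈ E, ∀ b ∈ E, a.1 = b.1 → a.2 ≠ b.2 →
      ∃ ε ∈ E, a.1 < ε.1 ∧ ε.2 = min a.2 b.2)
    (hexch2 : ∀ a ∈ E, ∀ b ∈ E, a.2 = b.2 → a.1 ≠ b.1 →
      ∃ ε ∈ E, a.2 < ε.2 ∧ ε.1 = min a.1 b.1)
    (mE : ℤ × ℤ) (hmE : mE ∈ E ∧ ∀ a ∈ E, mE ≤ a)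
    (cE : ℤ × ℤ) (hcE : cE ∈ E ∧ ∀ γ' : ℤ × ℤ, cE ≤ γ' → γ' ∈ E)
    (γ : ℤ × ℤ) (hγ : cE ≤ γ) :
    (∀ p q nn : ℕ,
      IsSatChainZ2 E mE cE p → IsSatChainZ2 E cE γ q → IsSatChainZ2 E mE γ nn →
      nn = p + q) ∧
    (∀ q : ℕ, IsSatChainZ2 E cE γ q → (q : ℤ) = (γ.1 - cE.1) + (γ.2 - cE.2)) := by
  constructor
  · intro p q nn hp hq hnn
    exact SatAux.chain_unique hmincl hexch1 hexch2 (p + q) mE γ nn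
      (SatAux.chain_append hp hq) hnn
  · intro q hq
    exact SatAux.chain_sum hcE.2 q cE γ le_rfl hq
end
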